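/- arXiv:2402.14967 — 5 statements merged into one kernel-verified Lean document; each statement's English description precedes it below -/
import Mathlib

section
/- Let g : ℝ → ℝ be strictly increasing. Then its generalized inverse g⁻¹(y) = inf {x : y ≤ g(x)} is continuous on the closure of the range of g, and g⁻¹(g(x)) = x for all x. -/
open Set

/-- The set defining the generalized inverse. -/
def genInvSet (M : ℝ) (g : ℝ → ℝ) (y : ℝ) : Set ℝ :=
  {x : ℝ | x ∈ Set.Icc (-M) M ∧ y ≤ g x}

/-- If `g` is strictly increasing on `[-M, M]`, then its generalized inverse
`g⁻¹(y) = inf {x ∈ [-M,M] | y ≤ g x}` is continuous on the closure of the range of `g`,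
and `g⁻¹ (g x) = x` for all `x ∈ [-M, M]`. -/
theorem stmt_2 (M : ℝ) (hM : 0 < M) (g : ℝ → ℝ)
    (hg : StrictMonoOn g (Set.Icc (-M) M)) :
    ContinuousOn (fun y : ℝ => sInf {x : ℝ | x ∈ Set.Icc (-M) M ∧ y ≤ g x})
      (closure (g '' Set.Icc (-M) M)) ∧
    (∀ x ∈ Set.Icc (-M) M,
      sInf {z : ℝ | z ∈ Set.Icc (-M) M ∧ g x ≤ g z} = x) := by
  have hMM : -M ≤ M := by linarith
  have hMmem : M ∈ Icc (-M) M := ⟨hMM, le_refl M⟩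
  have hle : ∀ y ∈ closure (g '' Icc (-M) M), y ≤ g M := by
    intro y hy
    have h1 : g '' Icc (-M) M ⊆ Iic (g M) := by
      rintro _ ⟨x, hx, rfl⟩
      exact hg.monotoneOn hx hMmem hx.2
    exact closure_minimal h1 isClosed_Iic hy
  have hbdd : ∀ y, BddBelow (genInvSet M g y) := fun y => ⟨-M, fun x hx => hx.1.1⟩
  have hne : ∀ y ∈ closure (g '' Icc (-M) M), M ∈ genInvSet M g y :=
    fun y hy => ⟨hMmem, hle y hy⟩
  constructor
  · show ContinuousOn (fun y : ℝ => sInf (genInvSet M g y)) (closure (g '' Icc (-M) M))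
    intro y₀ hy₀
    rw [Metric.continuousWithinAt_iff]
    intro ε hε
    set x₀ := sInf (genInvSet M g y₀) with hx₀
    have hx₀M : x₀ ≤ M := csInf_le (hbdd y₀) (hne y₀ hy₀)
    have hx₀m : -M ≤ x₀ := le_csInf ⟨M, hne y₀ hy₀⟩ (fun x hx => hx.1.1)
    obtain ⟨δ₁, hδ₁, hup⟩ : ∃ δ₁ > 0, ∀ y ∈ closure (g '' Icc (-M) M),
        y - y₀ < δ₁ → sInf (genInvSet M g y) ≤ x₀ + ε / 2 := by
      by_cases hc : M < x₀ + ε / 2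
      · exact ⟨1, one_pos, fun y hy _ =>
          le_trans (csInf_le (hbdd y) (hne y hy)) (le_of_lt hc)⟩
      · push_neg at hc
        have htmem : x₀ + ε / 4 ∈ Icc (-M) M := ⟨by linarith, by linarith⟩
        obtain ⟨x₁, hx₁S, hx₁t⟩ := exists_lt_of_csInf_lt ⟨M, hne y₀ hy₀⟩
          (show x₀ < x₀ + ε / 4 by linarith)
        have hgt : y₀ < g (x₀ + ε / 4) := lt_of_le_of_lt hx₁S.2 (hg hx₁S.1 htmem hx₁t)
        refine ⟨g (x₀ + ε / 4) - y₀, by linarith, fun y hy hyd => ?_⟩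
        have hyg : y ≤ g (x₀ + ε / 4) := by linarith
        exact le_trans (csInf_le (hbdd y) ⟨htmem, hyg⟩) (by linarith)
    obtain ⟨δ₂, hδ₂, hlo⟩ : ∃ δ₂ > 0, ∀ y ∈ closure (g '' Icc (-M) M),
        y₀ - y < δ₂ → x₀ - ε / 2 ≤ sInf (genInvSet M g y) := by
      by_cases hc : x₀ - ε / 2 < -M
      · exact ⟨1, one_pos, fun y hy _ =>
          le_trans (le_of_lt hc) (le_csInf ⟨M, hne y hy⟩ (fun x hx => hx.1.1))⟩
      · push_neg at hc
        have hsmem : x₀ - ε / 2 ∈ Icc (-M) M := ⟨hc, by linarith⟩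
        have hgs : g (x₀ - ε / 2) < y₀ := by
          by_contra h
          push_neg at h
          have : x₀ ≤ x₀ - ε / 2 := csInf_le (hbdd y₀) ⟨hsmem, h⟩
          linarith
        refine ⟨y₀ - g (x₀ - ε / 2), by linarith, fun y hy hyd => ?_⟩
        refine le_csInf ⟨M, hne y hy⟩ (fun x hx => ?_)
        by_contra hxs
        push_neg at hxs
        have h1 : g x ≤ g (x₀ - ε / 2) := hg.monotoneOn hx.1 hsmem (le_of_lt hxs)
        have h2 : y ≤ g (x₀ - ε / 2) := le_trans hx.2 h1
        linarith
    refine ⟨min δ₁ δ₂, lt_min hδ₁ hδ₂, fun y hy hyd => ?_⟩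
    rw [Real.dist_eq] at hyd ⊢
    have ha1 := (abs_lt.1 (lt_of_lt_of_le hyd (min_le_left _ _))).1
    have ha2 := (abs_lt.1 (lt_of_lt_of_le hyd (min_le_right _ _))).1
    have hb1 := (abs_lt.1 (lt_of_lt_of_le hyd (min_le_left _ _))).2
    have h1 := hup y hy (by linarith)
    have h2 := hlo y hy (by linarith)
    rw [abs_lt]
    constructor <;> linarith
  · intro x hx
    have hTeq : {z : ℝ | z ∈ Icc (-M) M ∧ g x ≤ g z} = Icc x M := by
      ext z
      simp only [mem_setOf_eq, mem_Icc]
      constructor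
      · rintro ⟨⟨hz1, hz2⟩, hgz⟩
        refine ⟨?_, hz2⟩
        by_contra h
        push_neg at h
        exact absurd hgz (not_le.2 (hg ⟨hz1, hz2⟩ hx h))
      · rintro ⟨h1, h2⟩
        exact ⟨⟨le_trans hx.1 h1, h2⟩, hg.monotoneOn hx ⟨le_trans hx.1 h1, h2⟩ h1⟩
    rw [hTeq, csInf_Icc hx.2]
end

section
/- Let b : K → ℝ be a continuous function on a compact set K ⊂ ℝ that is not constant. Define its modulus of continuity ω(h) = sup { |b(x)−b(y)| : x,y ∈ K, |x−y| ≤ h }, let φ be the generalized inverse of ω, i.e. φ(y) = inf {h : y ≤ ω(h)}, and let Φ be the lower convex envelope of φ. Then Φ(0) = 0 and Φ(h) > 0 for all h > 0. -/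
private lemma affine_convexOn (s : Set ℝ) (hs : Convex ℝ s) (m q : ℝ) :
    ConvexOn ℝ s (fun t => m * t + q) := by
  refine ⟨hs, ?_⟩
  intro x _ y _ a c ha hc hac
  simp only [smul_eq_mul]
  refine le_of_eq ?_
  have hc1 : c = 1 - a := by linarith
  subst hc1
  ring

/-- Let `b` be continuous and non-constant on a compact set `K ⊆ ℝ`.  Let
`ω h = sup {|b x - b y| : x, y ∈ K, |x - y| ≤ h}` be its modulus of continuity,
`φ y = inf {h ≥ 0 | y ≤ ω h}` the generalized inverse of `ω`, and `Φ` the lower convex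
envelope of `φ` on `[0, D]` where `D = sup {|b x - b y| : x, y ∈ K}`.  Then `Φ 0 = 0`
and `Φ h > 0` for every `h ∈ (0, D]`. -/
theorem stmt_6 (K : Set ℝ) (hK : IsCompact K) (b : ℝ → ℝ)
    (hb : ContinuousOn b K) (hnc : ∃ x ∈ K, ∃ y ∈ K, b x ≠ b y)
    (ω φ Φ : ℝ → ℝ) (D : ℝ)
    (hD : D = sSup {d : ℝ | ∃ x ∈ K, ∃ y ∈ K, d = |b x - b y|})
    (hω : ∀ h : ℝ, ω h = sSup {d : ℝ | ∃ x ∈ K, ∃ y ∈ K, |x - y| ≤ h ∧ d = |b x - b y|})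
    (hφ : ∀ y : ℝ, φ y = sInf {h : ℝ | 0 ≤ h ∧ y ≤ ω h})
    (hΦconv : ConvexOn ℝ (Set.Icc 0 D) Φ)
    (hΦle : ∀ h ∈ Set.Icc 0 D, Φ h ≤ φ h)
    (hΦmax : ∀ ψ : ℝ → ℝ, ConvexOn ℝ (Set.Icc 0 D) ψ →
      (∀ h ∈ Set.Icc 0 D, ψ h ≤ φ h) → ∀ h ∈ Set.Icc 0 D, ψ h ≤ Φ h) :
    Φ 0 = 0 ∧ ∀ h ∈ Set.Ioc 0 D, 0 < Φ h := by
  obtain ⟨x₀, hx₀, y₀, hy₀, hne⟩ := hnc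
  -- bound on values of b
  obtain ⟨C, hC⟩ := hK.exists_bound_of_continuousOn hb
  -- bound on K itself
  obtain ⟨R, hR⟩ := hK.exists_bound_of_continuousOn continuousOn_id
  have hC0 : 0 ≤ C := le_trans (norm_nonneg _) (hC x₀ hx₀)
  have hR0 : 0 ≤ R := le_trans (norm_nonneg _) (hR x₀ hx₀)
  have hbd : ∀ x ∈ K, ∀ y ∈ K, |b x - b y| ≤ 2 * C := by
    intro x hx y hy
    calc |b x - b y| ≤ |b x| + |b y| := abs_sub _ _
      _ ≤ 2 * C := by
        have := hC x hx; have := hC y hy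
        simp only [Real.norm_eq_abs] at *; linarith
  have hKbd : ∀ x ∈ K, ∀ y ∈ K, |x - y| ≤ 2 * R := by
    intro x hx y hy
    calc |x - y| ≤ |x| + |y| := abs_sub _ _
      _ ≤ 2 * R := by
        have := hR x hx; have := hR y hy
        simp only [Real.norm_eq_abs, id] at *; linarith
  -- D facts
  have hDbddAbove : BddAbove {d : ℝ | ∃ x ∈ K, ∃ y ∈ K, d = |b x - b y|} := by
    refine ⟨2 * C, ?_⟩
    rintro d ⟨x, hx, y, hy, rfl⟩
    exact hbd x hx y hy
  have hDpos : 0 < D := by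
    rw [hD]
    refine lt_of_lt_of_le ?_ (le_csSup hDbddAbove ⟨x₀, hx₀, y₀, hy₀, rfl⟩)
    exact abs_pos.2 (sub_ne_zero.2 hne)
  -- ω facts
  have hω0 : ∀ h : ℝ, 0 ≤ h → 0 ≤ ω h := by
    intro h hh
    rw [hω]
    refine le_csSup ⟨2 * C, ?_⟩ ⟨x₀, hx₀, x₀, hx₀, by simpa using hh, by simp⟩
    rintro d ⟨x, hx, y, hy, _, rfl⟩
    exact hbd x hx y hy
  have hωR : D ≤ ω (2 * R) := by
    rw [hD]
    refine Real.sSup_le ?_ (hω0 (2 * R) (by linarith))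
    rintro d ⟨x, hx, y, hy, rfl⟩
    rw [hω]
    refine le_csSup ⟨2 * C, ?_⟩ ⟨x, hx, y, hy, hKbd x hx y hy, rfl⟩
    rintro d ⟨x, hx, y, hy, _, rfl⟩
    exact hbd x hx y hy
  -- φ facts
  have hφnonneg : ∀ y : ℝ, 0 ≤ φ y := by
    intro y
    rw [hφ]
    exact Real.sInf_nonneg fun h hh => hh.1
  have hφ0 : φ 0 ≤ 0 := by
    rw [hφ]
    exact csInf_le ⟨0, fun h hh => hh.1⟩ ⟨le_rfl, hω0 0 le_rfl⟩
  have hφmem : ∀ y : ℝ, y ≤ D → (2 * R : ℝ) ∈ {h : ℝ | 0 ≤ h ∧ y ≤ ω h} :=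
    fun y hy => ⟨by linarith, le_trans hy hωR⟩
  have hφpos : ∀ y : ℝ, 0 < y → y ≤ D → 0 < φ y := by
    intro y hy hyD
    have huc := hK.uniformContinuousOn_of_continuous hb
    rw [Metric.uniformContinuousOn_iff] at huc
    obtain ⟨δ, hδ, hδ'⟩ := huc (y / 2) (by linarith)
    have key : ∀ h ∈ {h : ℝ | 0 ≤ h ∧ y ≤ ω h}, δ / 2 ≤ h := by
      rintro h ⟨hh0, hhy⟩
      by_contra hlt
      push_neg at hlt
      have : ω h ≤ y / 2 := by
        rw [hω]
        refine Real.sSup_le ?_ (by linarith)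
        rintro d ⟨x, hx, z, hz, hxz, rfl⟩
        have : dist x z < δ := by
          rw [Real.dist_eq]; linarith
        have := hδ' x hx z hz this
        rw [Real.dist_eq] at this
        linarith
      linarith
    rw [hφ]
    have : δ / 2 ≤ sInf {h : ℝ | 0 ≤ h ∧ y ≤ ω h} :=
      le_csInf ⟨2 * R, hφmem y hyD⟩ key
    linarith
  have hφmono : ∀ a t : ℝ, a ≤ t → t ≤ D → φ a ≤ φ t := by
    intro a t hat htD
    rw [hφ, hφ]
    refine csInf_le_csInf ⟨0, fun h hh => hh.1⟩ ⟨2 * R, hφmem t htD⟩ ?_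
    rintro h ⟨hh0, hht⟩
    exact ⟨hh0, le_trans hat hht⟩
  -- Φ 0 = 0
  have hΦ0 : Φ 0 = 0 := by
    have h1 : Φ 0 ≤ 0 := le_trans (hΦle 0 ⟨le_rfl, hDpos.le⟩) hφ0
    have h2 : 0 ≤ Φ 0 :=
      hΦmax (fun _ => 0) (convexOn_const 0 (convex_Icc 0 D))
        (fun h _ => hφnonneg h) 0 ⟨le_rfl, hDpos.le⟩
    linarith
  refine ⟨hΦ0, ?_⟩
  rintro h₀ ⟨hh₀, hh₀D⟩
  set m := h₀ / 2 with hm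
  have hmpos : 0 < m := by positivity
  have hmD : m < D := by
    have : m < h₀ := by simp [hm]; linarith
    linarith
  have hc : 0 < φ m := hφpos m hmpos (by linarith)
  set a := φ m / (D - m) with ha
  have hapos : 0 < a := div_pos hc (by linarith)
  have hψle : ∀ t ∈ Set.Icc (0 : ℝ) D, a * t + -(a * m) ≤ φ t := by
    rintro t ⟨ht0, htD⟩
    rcases le_total t m with h | h
    · have : a * t + -(a * m) ≤ 0 := by nlinarith
      exact le_trans this (hφnonneg t)
    · have h1 : a * t + -(a * m) ≤ a * D + -(a * m) := by nlinarith
      have h2 : a * D + -(a * m) = φ m := by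
        have e1 : a * D + -(a * m) = a * (D - m) := by ring
        have e2 : a * (D - m) = φ m := by
          rw [ha]
          exact div_mul_cancel₀ (φ m) (ne_of_gt (by linarith))
        rw [e1, e2]
      have h3 : φ m ≤ φ t := hφmono m t h htD
      linarith
  have := hΦmax (fun t => a * t + -(a * m))
    (affine_convexOn _ (convex_Icc 0 D) a (-(a * m))) hψle h₀ ⟨hh₀.le, hh₀D⟩
  have hval : 0 < a * h₀ + -(a * m) := by
    rw [hm]; nlinarith
  exact hval.trans_le this
end

section
/- For the flux f(u) = u² + |u| with velocity a(u) = 2u + sign(u), and initial datum u₀(x) = sign(x), the function u(t,x) = U(x/t) where U(ξ) = −1 for ξ ≤ −3, U(ξ) = (ξ+1)/2 for −3 ≤ ξ ≤ −1, U(ξ) = 0 for −1 ≤ ξ ≤ 1, U(ξ) = (ξ−1)/2 for 1 ≤ ξ ≤ 3, U(ξ) = 1 for ξ ≥ 3, is a weak solution of u_t + f(u)_x = 0 on (0,∞) × ℝ with initial datum u₀, i.e. ∫∫ [u θ_t + f(u) θ_x] dt dx + ∫ u₀(x) θ(0,x) dx = 0 for all θ ∈ C_c^∞([0,∞)×ℝ).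 -/
open MeasureTheory Set

/-- The self-similar rarefaction profile of the example. -/
noncomputable def Uprof (ξ : ℝ) : ℝ :=
  if ξ ≤ -3 then -1
  else if ξ ≤ -1 then (ξ + 1) / 2
  else if ξ ≤ 1 then 0
  else if ξ ≤ 3 then (ξ - 1) / 2
  else 1

lemma Uprof_le_neg3 {ξ : ℝ} (h : ξ ≤ -3) : Uprof ξ = -1 := by simp [Uprof, h]

lemma Uprof_mid_neg {ξ : ℝ} (h1 : -3 ≤ ξ) (h2 : ξ ≤ -1) : Uprof ξ = (ξ + 1) / 2 := by
  unfold Uprof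
  split_ifs <;> linarith

lemma Uprof_center {ξ : ℝ} (h1 : -1 ≤ ξ) (h2 : ξ ≤ 1) : Uprof ξ = 0 := by
  unfold Uprof
  split_ifs <;> linarith

lemma Uprof_mid_pos {ξ : ℝ} (h1 : 1 ≤ ξ) (h2 : ξ ≤ 3) : Uprof ξ = (ξ - 1) / 2 := by
  unfold Uprof
  split_ifs <;> linarith

lemma Uprof_ge_3 {ξ : ℝ} (h : 3 ≤ ξ) : Uprof ξ = 1 := by
  unfold Uprof
  split_ifs <;> linarith

lemma Uprof_abs_le (ξ : ℝ) : |Uprof ξ| ≤ 1 := by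
  unfold Uprof
  split_ifs with h1 h2 h3 h4 <;> [skip; skip; skip; skip; skip] <;>
    rw [abs_le] <;> constructor <;> nlinarith

lemma Uprof_continuous : Continuous Uprof := by
  unfold Uprof
  apply Continuous.if_le _ _ continuous_id continuous_const
  · intro x hx; simp only [id] at hx; subst hx; norm_num
  · exact continuous_const
  apply Continuous.if_le _ _ continuous_id continuous_const
  · intro x hx; simp only [id] at hx; subst hx; norm_num
  · exact (continuous_id.add continuous_const).div_const 2
  apply Continuous.if_le _ _ continuous_id continuous_const
  · intro x hx; simp only [id] at hx; subst hx; norm_num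
  · exact continuous_const
  apply Continuous.if_le _ _ continuous_id continuous_const
  · intro x hx; simp only [id] at hx; subst hx; norm_num
  · exact (continuous_id.sub continuous_const).div_const 2
  · exact continuous_const

noncomputable def utd (t x : ℝ) : ℝ := if t < |x| ∧ |x| < 3*t then -x/(2*t^2) else 0

lemma utd_abs_le {t x : ℝ} (hx : x ≠ 0) : |utd t x| ≤ 9 / (2*|x|) := by
  have hx' : 0 < |x| := abs_pos.2 hx
  unfold utd
  split_ifs with h
  · obtain ⟨h1, h2⟩ := h
    have ht : 0 < t := by nlinarith
    rw [abs_div, abs_neg, abs_of_pos (by positivity : (0:ℝ) < 2*t^2)]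
    rw [div_le_div_iff₀ (by positivity) (by positivity)]
    nlinarith [sq_nonneg (3*t - |x|), sq_nonneg t]
  · simp only [abs_zero]; positivity

lemma utd_measurable (x : ℝ) : Measurable (fun t => utd t x) := by
  unfold utd
  refine Measurable.ite ?_ (by fun_prop) measurable_const
  exact MeasurableSet.inter (measurableSet_lt measurable_id measurable_const)
    (measurableSet_lt measurable_const (measurable_const.mul measurable_id))

lemma theta_line_deriv {θ : ℝ × ℝ → ℝ} (hθ : ContDiff ℝ (⊤ : ℕ∞) θ) (x t : ℝ) :
    HasDerivAt (fun s => θ (s, x)) (fderiv ℝ θ (t, x) (1, 0)) t := by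
  have h1 : HasDerivAt (fun s : ℝ => (s, x)) ((1:ℝ), (0:ℝ)) t :=
    (hasDerivAt_id t).prodMk (hasDerivAt_const t x)
  exact (hθ.differentiable (by simp) (t, x)).hasFDerivAt.comp_hasDerivAt t h1

lemma time_FTC {θ : ℝ × ℝ → ℝ} (hθ : ContDiff ℝ (⊤ : ℕ∞) θ) {b : ℝ} (hb : 0 < b)
    {M : ℝ} (hM : ∀ p : ℝ × ℝ, |θ p| ≤ M ∧ ‖fderiv ℝ θ p‖ ≤ M)
    (hz : ∀ p : ℝ × ℝ, b ≤ |p.1| ∨ b ≤ |p.2| → θ p = 0 ∧ fderiv ℝ θ p = 0)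
    {x : ℝ} (hx : x ≠ 0) :
    ∫ t in Ioi (0:ℝ), (Uprof (x/t) * fderiv ℝ θ (t, x) (1, 0) + utd t x * θ (t, x))
      = - (Real.sign x * θ (0, x)) := by
  have hx' : 0 < |x| := abs_pos.2 hx
  set c : ℝ := |x|/4 with hc
  have hc0 : 0 < c := by positivity
  set w : ℝ → ℝ := fun t => Uprof (x / max t c) with hw
  -- w agrees with Uprof (x/t) for positive t
  have hwpos : ∀ t : ℝ, 0 < t → w t = Uprof (x / t) := by
    intro t ht
    rcases le_or_gt c t with h | h
    · rw [hw]; simp [max_eq_left h]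
    · -- t < c = |x|/4, so |x/t| > 4 and |x/max t c| = 4
      have h4 : (4:ℝ) ≤ |x| / t := by
        rw [le_div_iff₀ ht]; nlinarith
      have hmax : max t c = c := max_eq_right h.le
      rcases lt_or_gt_of_ne hx with hneg | hpos
      · have hxabs : |x| = -x := abs_of_neg hneg
        have e1 : x / t ≤ -3 := by
          rw [div_le_iff₀ ht]; nlinarith
        have e2 : x / c ≤ -3 := by
          rw [div_le_iff₀ hc0]; rw [hc]; nlinarith
        rw [hw]; simp only [hmax]
        rw [Uprof_le_neg3 e1, Uprof_le_neg3 e2]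
      · have hxabs : |x| = x := abs_of_pos hpos
        have e1 : (3:ℝ) ≤ x / t := by
          rw [le_div_iff₀ ht]; nlinarith
        have e2 : (3:ℝ) ≤ x / c := by
          rw [le_div_iff₀ hc0]; rw [hc]; nlinarith
        rw [hw]; simp only [hmax]
        rw [Uprof_ge_3 e1, Uprof_ge_3 e2]
  -- w at 0 is sign x
  have hw0 : w 0 = Real.sign x := by
    rw [hw]; simp only [max_eq_right hc0.le]
    rcases lt_or_gt_of_ne hx with hneg | hpos
    · have hxabs : |x| = -x := abs_of_neg hneg
      have : x / c = -4 := by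
        rw [hc, hxabs]; rw [div_div_eq_mul_div, mul_comm]
        rw [div_eq_iff (by linarith : -x ≠ 0)]; ring
      rw [this, Uprof_le_neg3 (by norm_num), Real.sign_of_neg hneg]
    · have hxabs : |x| = x := abs_of_pos hpos
      have : x / c = 4 := by rw [hc, hxabs]; field_simp
      rw [this, Uprof_ge_3 (by norm_num), Real.sign_of_pos hpos]
  have hwc : Continuous w := by
    apply Uprof_continuous.comp
    exact continuous_const.div (continuous_id.max continuous_const)
      (fun t => ne_of_gt (lt_of_lt_of_le hc0 (le_max_right t c)))
  -- the three local descriptions of w on (0,∞)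
  have hwlow : ∀ s ∈ Ioo (0:ℝ) (|x|/3), w s = Real.sign x := by
    intro s hs
    rw [hwpos s hs.1]
    rcases lt_or_gt_of_ne hx with hneg | hpos
    · have hxabs : |x| = -x := abs_of_neg hneg
      rw [Uprof_le_neg3 (by rw [div_le_iff₀ hs.1]; nlinarith [hs.2]), Real.sign_of_neg hneg]
    · have hxabs : |x| = x := abs_of_pos hpos
      rw [Uprof_ge_3 (by rw [le_div_iff₀ hs.1]; nlinarith [hs.2]), Real.sign_of_pos hpos]
  have hwfan : ∀ s ∈ Ioo (|x|/3) |x|, w s = (x / s - Real.sign x) / 2 := by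
    intro s hs
    have hs0 : 0 < s := lt_trans (by positivity) hs.1
    rw [hwpos s hs0]
    rcases lt_or_gt_of_ne hx with hneg | hpos
    · have hxabs : |x| = -x := abs_of_neg hneg
      rw [Uprof_mid_neg (by rw [le_div_iff₀ hs0]; nlinarith [hs.1])
        (by rw [div_le_iff₀ hs0]; nlinarith [hs.2]), Real.sign_of_neg hneg]
      ring
    · have hxabs : |x| = x := abs_of_pos hpos
      rw [Uprof_mid_pos (by rw [le_div_iff₀ hs0]; nlinarith [hs.2])
        (by rw [div_le_iff₀ hs0]; nlinarith [hs.1]), Real.sign_of_pos hpos]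
  have hwhigh : ∀ s ∈ Ioi |x|, w s = 0 := by
    intro s hs
    simp only [mem_Ioi] at hs
    have hs0 : 0 < s := lt_trans hx' hs
    rw [hwpos s hs0]
    have h1 : |x / s| ≤ 1 := by
      rw [abs_div, abs_of_pos hs0, div_le_one hs0]; linarith
    rw [abs_le] at h1
    exact Uprof_center h1.1 h1.2
  -- now the FTC part
  have hD1 : ∀ t, HasDerivAt (fun s => θ (s, x)) (fderiv ℝ θ (t, x) (1, 0)) t :=
    theta_line_deriv hθ x
  set gd : ℝ → ℝ := fun t => Uprof (x/t) * fderiv ℝ θ (t, x) (1, 0) + utd t x * θ (t, x) with hgd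
  set g : ℝ → ℝ := fun t => w t * θ (t, x) with hg
  have hderiv : ∀ t ∈ Ioo (0:ℝ) b \ ({|x|/3, |x|} : Set ℝ), HasDerivAt g (gd t) t := by
    intro t ht
    obtain ⟨⟨ht0, htb⟩, hts⟩ := ht
    simp only [mem_insert_iff, mem_singleton_iff, not_or] at hts
    have hwd : HasDerivAt w (utd t x) t := by
      rcases lt_trichotomy t (|x|/3) with h1 | h1 | h1
      · have hmem : Ioo (0:ℝ) (|x|/3) ∈ nhds t := Ioo_mem_nhds ht0 h1
        have hu0 : utd t x = 0 := by
          unfold utd; rw [if_neg]; push_neg; intro h2; linarith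
        rw [hu0]
        exact (hasDerivAt_const t (Real.sign x)).congr_of_eventuallyEq
          (Filter.eventually_of_mem hmem (fun s hs => hwlow s hs))
      · exact absurd h1 hts.1
      · rcases lt_trichotomy t |x| with h2 | h2 | h2
        · have hmem : Ioo (|x|/3) |x| ∈ nhds t := Ioo_mem_nhds h1 h2
          have hd0 : HasDerivAt (fun s => (x / s - Real.sign x) / 2) (utd t x) t := by
            have h3 : HasDerivAt (fun s : ℝ => x * s⁻¹) (x * (-(t^2)⁻¹)) t :=
              (hasDerivAt_inv (ne_of_gt ht0)).const_mul x
            have h3' : HasDerivAt (fun s : ℝ => x / s) (x * -(t^2)⁻¹) t := by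
              simpa [div_eq_mul_inv] using h3
            have h4 := (h3'.sub_const (Real.sign x)).div_const 2
            have hu1 : utd t x = x * -(t ^ 2)⁻¹ / 2 := by
              unfold utd; rw [if_pos ⟨h2, by linarith⟩]
              field_simp
            rw [hu1]
            exact h4
          exact hd0.congr_of_eventuallyEq
            (Filter.eventually_of_mem hmem (fun s hs => hwfan s hs))
        · exact absurd h2 hts.2
        · have hmem : Ioi |x| ∈ nhds t := Ioi_mem_nhds h2
          have hu0 : utd t x = 0 := by
            unfold utd; rw [if_neg]; push_neg; intro h3; linarith
          rw [hu0]
          exact (hasDerivAt_const t (0:ℝ)).congr_of_eventuallyEq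
            (Filter.eventually_of_mem hmem (fun s hs => hwhigh s hs))
    have hprod := hwd.mul (hD1 t)
    have : gd t = utd t x * θ (t, x) + w t * fderiv ℝ θ (t, x) (1, 0) := by
      rw [hgd, hwpos t ht0]; ring
    rw [this]
    exact hprod
  have hgc : Continuous g :=
    hwc.mul (hθ.continuous.comp (continuous_id.prodMk continuous_const))
  -- integrability of gd
  have hmeasgd : Measurable gd := by
    apply Measurable.add
    · apply Measurable.mul
      · exact Uprof_continuous.measurable.comp (measurable_const.div measurable_id)
      · exact (((hθ.continuous_fderiv (by simp)).comp
          (continuous_id.prodMk continuous_const)).clm_apply continuous_const).measurable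
    · exact (utd_measurable x).mul
        (hθ.continuous.comp (continuous_id.prodMk continuous_const)).measurable
  have hbound : ∀ t : ℝ, ‖gd t‖ ≤ M + 9 / (2*|x|) * M := by
    intro t
    have h1 : |fderiv ℝ θ (t, x) (1, 0)| ≤ M := by
      rw [← Real.norm_eq_abs]
      calc ‖fderiv ℝ θ (t, x) (1, 0)‖ ≤ ‖fderiv ℝ θ (t, x)‖ * ‖((1:ℝ), (0:ℝ))‖ :=
            ContinuousLinearMap.le_opNorm _ _
        _ ≤ M * 1 := by
            apply mul_le_mul (hM (t, x)).2 _ (norm_nonneg _)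
              (le_trans (abs_nonneg _) (hM (t,x)).1)
            rw [Prod.norm_def]; norm_num
        _ = M := mul_one M
    have h2 : |θ (t, x)| ≤ M := (hM (t, x)).1
    have hMnn : 0 ≤ M := le_trans (abs_nonneg _) (hM (0,0)).1
    rw [hgd, Real.norm_eq_abs]
    calc |Uprof (x/t) * fderiv ℝ θ (t, x) (1, 0) + utd t x * θ (t, x)|
        ≤ |Uprof (x/t) * fderiv ℝ θ (t, x) (1, 0)| + |utd t x * θ (t, x)| := abs_add_le _ _
      _ ≤ 1 * M + 9 / (2*|x|) * M := by
          apply add_le_add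
          · rw [abs_mul]
            exact mul_le_mul (Uprof_abs_le _) h1 (abs_nonneg _) zero_le_one
          · rw [abs_mul]
            exact mul_le_mul (utd_abs_le hx) h2 (abs_nonneg _) (by positivity)
      _ = M + 9 / (2*|x|) * M := by ring
  have hint : IntervalIntegrable gd volume 0 b := by
    rw [intervalIntegrable_iff_integrableOn_Ioc_of_le hb.le]
    exact Integrable.mono' (integrableOn_const measure_Ioc_lt_top.ne)
      hmeasgd.aestronglyMeasurable (Filter.Eventually.of_forall (fun t => hbound t))
  have key : ∫ t in (0:ℝ)..b, gd t = g b - g 0 :=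
    integral_eq_of_hasDerivAt_off_countable_of_le g gd hb.le
      (Set.to_countable _) hgc.continuousOn hderiv hint
  have hgb : g b = 0 := by
    have := (hz (b, x) (Or.inl (by rw [abs_of_pos hb]))).1
    rw [hg]; simp only; rw [this, mul_zero]
  have hg0 : g 0 = Real.sign x * θ (0, x) := by rw [hg]; simp only [hw0]
  have hIoibz : ∀ t ∈ Ioi b, gd t = 0 := by
    intro t ht
    simp only [mem_Ioi] at ht
    obtain ⟨hz1, hz2⟩ := hz (t, x) (Or.inl (by rw [abs_of_pos (lt_trans hb ht)]; exact ht.le))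
    rw [hgd]; simp only [hz1, hz2, mul_zero, ContinuousLinearMap.zero_apply, add_zero]
  have hsplit : ∫ t in Ioi (0:ℝ), gd t = ∫ t in Ioc (0:ℝ) b, gd t := by
    rw [← Ioc_union_Ioi_eq_Ioi hb.le]
    rw [setIntegral_union (Ioc_disjoint_Ioi le_rfl) measurableSet_Ioi
      ((intervalIntegrable_iff_integrableOn_Ioc_of_le hb.le).1 hint)
      (by
        apply (integrableOn_congr_fun hIoibz measurableSet_Ioi).2
        exact integrableOn_zero)]
    rw [setIntegral_congr_fun measurableSet_Ioi hIoibz]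
    simp
  calc ∫ t in Ioi (0:ℝ), (Uprof (x/t) * fderiv ℝ θ (t, x) (1, 0) + utd t x * θ (t, x))
      = ∫ t in Ioc (0:ℝ) b, gd t := hsplit
    _ = ∫ t in (0:ℝ)..b, gd t := (intervalIntegral.integral_of_le hb.le).symm
    _ = g b - g 0 := key
    _ = - (Real.sign x * θ (0, x)) := by rw [hgb, hg0, zero_sub]

lemma utd_measurable' (t : ℝ) : Measurable (fun x => utd t x) := by
  unfold utd
  refine Measurable.ite ?_ (by fun_prop) measurable_const
  exact MeasurableSet.inter (measurableSet_lt measurable_const measurable_abs)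
    (measurableSet_lt measurable_abs measurable_const)

lemma theta_line_deriv2 {θ : ℝ × ℝ → ℝ} (hθ : ContDiff ℝ (⊤ : ℕ∞) θ) (t x : ℝ) :
    HasDerivAt (fun y => θ (t, y)) (fderiv ℝ θ (t, x) (0, 1)) x := by
  have h1 : HasDerivAt (fun y : ℝ => (t, y)) ((0:ℝ), (1:ℝ)) x :=
    (hasDerivAt_const x t).prodMk (hasDerivAt_id x)
  exact (hθ.differentiable (by simp) (t, x)).hasFDerivAt.comp_hasDerivAt x h1

lemma utd_abs_le' {t x : ℝ} (ht : 0 < t) : |utd t x| ≤ 3 / (2*t) := by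
  unfold utd
  split_ifs with h
  · obtain ⟨h1, h2⟩ := h
    rw [abs_div, abs_neg, abs_of_pos (by positivity : (0:ℝ) < 2*t^2)]
    rw [div_le_div_iff₀ (by positivity) (by positivity)]
    nlinarith [abs_nonneg x]
  · simp only [abs_zero]; positivity

lemma space_FTC {θ : ℝ × ℝ → ℝ} (hθ : ContDiff ℝ (⊤ : ℕ∞) θ) {b : ℝ} (hb : 0 < b)
    {M : ℝ} (hM : ∀ p : ℝ × ℝ, |θ p| ≤ M ∧ ‖fderiv ℝ θ p‖ ≤ M)
    (hz : ∀ p : ℝ × ℝ, b ≤ |p.1| ∨ b ≤ |p.2| → θ p = 0 ∧ fderiv ℝ θ p = 0)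
    {t : ℝ} (ht : 0 < t) :
    ∫ x : ℝ, (((Uprof (x/t))^2 + |Uprof (x/t)|) * fderiv ℝ θ (t, x) (0, 1)
      + (- utd t x) * θ (t, x)) = 0 := by
  set V : ℝ → ℝ := fun x => (Uprof (x/t))^2 + |Uprof (x/t)| with hV
  set hd : ℝ → ℝ := fun x => V x * fderiv ℝ θ (t, x) (0, 1) + (- utd t x) * θ (t, x) with hhd
  set h : ℝ → ℝ := fun x => V x * θ (t, x) with hh
  -- region values of V
  have hVleft : ∀ y ∈ Iio (-(3*t)), V y = 2 := by
    intro y hy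
    simp only [mem_Iio] at hy
    rw [hV]; simp only
    rw [Uprof_le_neg3 (by rw [div_le_iff₀ ht]; linarith)]
    norm_num
  have hVnegfan : ∀ y ∈ Ioo (-(3*t)) (-t), V y = ((y/t+1)/2)^2 - ((y/t+1)/2) := by
    intro y hy
    obtain ⟨hy1, hy2⟩ := hy
    have e1 : -3 ≤ y/t := by rw [le_div_iff₀ ht]; linarith
    have e2 : y/t ≤ -1 := by rw [div_le_iff₀ ht]; linarith
    rw [hV]; simp only
    rw [Uprof_mid_neg e1 e2, abs_of_nonpos (by linarith : (y/t+1)/2 ≤ 0)]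
    ring
  have hVcenter : ∀ y ∈ Ioo (-t) t, V y = 0 := by
    intro y hy
    obtain ⟨hy1, hy2⟩ := hy
    rw [hV]; simp only
    rw [Uprof_center (by rw [le_div_iff₀ ht]; linarith) (by rw [div_le_iff₀ ht]; linarith)]
    norm_num
  have hVposfan : ∀ y ∈ Ioo t (3*t), V y = ((y/t-1)/2)^2 + ((y/t-1)/2) := by
    intro y hy
    obtain ⟨hy1, hy2⟩ := hy
    have e1 : 1 ≤ y/t := by rw [le_div_iff₀ ht]; linarith
    have e2 : y/t ≤ 3 := by rw [div_le_iff₀ ht]; linarith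
    rw [hV]; simp only
    rw [Uprof_mid_pos e1 e2, abs_of_nonneg (by linarith : (0:ℝ) ≤ (y/t-1)/2)]
  have hVright : ∀ y ∈ Ioi (3*t), V y = 2 := by
    intro y hy
    simp only [mem_Ioi] at hy
    rw [hV]; simp only
    rw [Uprof_ge_3 (by rw [le_div_iff₀ ht]; linarith)]
    norm_num
  -- derivative of h off the four kink points
  have hderiv : ∀ x ∈ Ioo (-b) b \ ({-(3*t), -t, t, 3*t} : Set ℝ), HasDerivAt h (hd x) x := by
    intro x hx
    obtain ⟨⟨hx1, hx2⟩, hxs⟩ := hx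
    simp only [mem_insert_iff, mem_singleton_iff, not_or] at hxs
    obtain ⟨hs1, hs2, hs3, hs4⟩ := hxs
    have hVd : HasDerivAt V (- utd t x) x := by
      rcases lt_or_gt_of_ne hs1 with h1 | h1
      · -- x < -3t
        have hu0 : utd t x = 0 := by
          unfold utd; rw [if_neg]; push_neg; intro h2
          rw [abs_of_neg (by linarith : x < 0)]; linarith
        rw [hu0, neg_zero]
        exact (hasDerivAt_const x (2:ℝ)).congr_of_eventuallyEq
          (Filter.eventually_of_mem (Iio_mem_nhds h1) hVleft)
      rcases lt_or_gt_of_ne hs2 with h2 | h2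
      · -- -3t < x < -t : negative fan
        have hxneg : x < 0 := by linarith
        have hu1 : - utd t x = x/(2*t^2) := by
          unfold utd
          rw [if_pos ⟨by rw [abs_of_neg hxneg]; linarith, by rw [abs_of_neg hxneg]; linarith⟩]
          ring
        have hu : HasDerivAt (fun y : ℝ => (y/t+1)/2) (1/t/2) x :=
          (((hasDerivAt_id x).div_const t).add_const 1).div_const 2
        have hd0 := (hu.pow 2).sub hu
        rw [hu1]
        have : x/(2*t^2) = 2 * ((x/t+1)/2) ^ (2-1) * (1/t/2) - 1/t/2 := by
          field_simp
          rw [show (2:ℕ) - 1 = 1 from rfl, pow_one]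
          linear_combination -(div_mul_cancel₀ (x+t) (by positivity : (2*t) ≠ 0))
        rw [this]
        exact hd0.congr_of_eventuallyEq
          (Filter.eventually_of_mem (Ioo_mem_nhds h1 h2) hVnegfan)
      rcases lt_or_gt_of_ne hs3 with h3 | h3
      · -- -t < x < t
        have hu0 : utd t x = 0 := by
          unfold utd; rw [if_neg]; push_neg; intro hctr
          linarith [abs_lt.2 ⟨(by linarith : -t < x), h3⟩]
        rw [hu0, neg_zero]
        exact (hasDerivAt_const x (0:ℝ)).congr_of_eventuallyEq
          (Filter.eventually_of_mem (Ioo_mem_nhds h2 h3) hVcenter)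
      rcases lt_or_gt_of_ne hs4 with h4 | h4
      · -- t < x < 3t : positive fan
        have hxpos : 0 < x := by linarith
        have hu1 : - utd t x = x/(2*t^2) := by
          unfold utd
          rw [if_pos ⟨by rw [abs_of_pos hxpos]; linarith, by rw [abs_of_pos hxpos]; linarith⟩]
          ring
        have hu : HasDerivAt (fun y : ℝ => (y/t-1)/2) (1/t/2) x :=
          (((hasDerivAt_id x).div_const t).sub_const 1).div_const 2
        have hd0 := (hu.pow 2).add hu
        rw [hu1]
        have : x/(2*t^2) = 2 * ((x/t-1)/2) ^ (2-1) * (1/t/2) + 1/t/2 := by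
          field_simp
          rw [show (2:ℕ) - 1 = 1 from rfl, pow_one]
          linear_combination -(div_mul_cancel₀ (x-t) (by positivity : (2*t) ≠ 0))
        rw [this]
        exact hd0.congr_of_eventuallyEq
          (Filter.eventually_of_mem (Ioo_mem_nhds h3 h4) hVposfan)
      · -- x > 3t
        have hu0 : utd t x = 0 := by
          unfold utd; rw [if_neg]; push_neg; intro h5
          rw [abs_of_pos (by linarith : (0:ℝ) < x)]; linarith
        rw [hu0, neg_zero]
        exact (hasDerivAt_const x (2:ℝ)).congr_of_eventuallyEq
          (Filter.eventually_of_mem (Ioi_mem_nhds h4) hVright)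
    have : hd x = -utd t x * θ (t, x) + V x * fderiv ℝ θ (t, x) (0, 1) := by
      rw [hhd]; ring
    rw [this]
    exact hVd.mul (theta_line_deriv2 hθ t x)
  have hUC : Continuous (fun x : ℝ => Uprof (x/t)) :=
    Uprof_continuous.comp (continuous_id.div_const t)
  have hVc : Continuous V := (hUC.pow 2).add hUC.abs
  have hhc : Continuous h :=
    hVc.mul (hθ.continuous.comp (continuous_const.prodMk continuous_id))
  have hmeashd : Measurable hd := by
    apply Measurable.add
    · exact hVc.measurable.mul (((hθ.continuous_fderiv (by simp)).comp
        (continuous_const.prodMk continuous_id)).clm_apply continuous_const).measurable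
    · exact ((utd_measurable' t).neg).mul
        (hθ.continuous.comp (continuous_const.prodMk continuous_id)).measurable
  have hVbd : ∀ y : ℝ, |V y| ≤ 2 := by
    intro y
    have := Uprof_abs_le (y/t)
    rw [hV]; simp only
    rw [abs_of_nonneg (by positivity : (0:ℝ) ≤ (Uprof (y/t))^2 + |Uprof (y/t)|)]
    nlinarith [abs_nonneg (Uprof (y/t)), sq_abs (Uprof (y/t))]
  have hbound : ∀ x : ℝ, ‖hd x‖ ≤ 2*M + 3/(2*t)*M := by
    intro x
    have h1 : |fderiv ℝ θ (t, x) (0, 1)| ≤ M := by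
      rw [← Real.norm_eq_abs]
      calc ‖fderiv ℝ θ (t, x) (0, 1)‖ ≤ ‖fderiv ℝ θ (t, x)‖ * ‖((0:ℝ), (1:ℝ))‖ :=
            ContinuousLinearMap.le_opNorm _ _
        _ ≤ M * 1 := by
            apply mul_le_mul (hM (t, x)).2 _ (norm_nonneg _)
              (le_trans (abs_nonneg _) (hM (t,x)).1)
            rw [Prod.norm_def]; norm_num
        _ = M := mul_one M
    have hMnn : 0 ≤ M := le_trans (abs_nonneg _) (hM (0,0)).1
    rw [hhd, Real.norm_eq_abs]
    calc |V x * fderiv ℝ θ (t, x) (0, 1) + (- utd t x) * θ (t, x)|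
        ≤ |V x * fderiv ℝ θ (t, x) (0, 1)| + |(- utd t x) * θ (t, x)| := abs_add_le _ _
      _ ≤ 2 * M + 3/(2*t) * M := by
          apply add_le_add
          · rw [abs_mul]
            exact mul_le_mul (hVbd x) h1 (abs_nonneg _) (by norm_num)
          · rw [abs_mul, abs_neg]
            exact mul_le_mul (utd_abs_le' ht) (hM (t,x)).1 (abs_nonneg _) (by positivity)
      _ = 2*M + 3/(2*t)*M := by ring
  have hint : IntervalIntegrable hd volume (-b) b := by
    rw [intervalIntegrable_iff_integrableOn_Ioc_of_le (by linarith)]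
    exact Integrable.mono' (integrableOn_const measure_Ioc_lt_top.ne)
      hmeashd.aestronglyMeasurable (Filter.Eventually.of_forall (fun y => hbound y))
  have key : ∫ x in (-b)..b, hd x = h b - h (-b) :=
    integral_eq_of_hasDerivAt_off_countable_of_le h hd (by linarith)
      (Set.to_countable _) hhc.continuousOn hderiv hint
  have hhb : h b = 0 := by
    have := (hz (t, b) (Or.inr (by rw [abs_of_pos hb]))).1
    rw [hh]; simp only; rw [this, mul_zero]
  have hhb' : h (-b) = 0 := by
    have := (hz (t, -b) (Or.inr (by rw [abs_neg, abs_of_pos hb]))).1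
    rw [hh]; simp only; rw [this, mul_zero]
  have hcompl : ∀ x ∉ Ioc (-b) b, hd x = 0 := by
    intro x hxn
    have : b ≤ |x| := by
      simp only [mem_Ioc, not_and_or, not_lt, not_le] at hxn
      rcases hxn with h' | h'
      · rw [abs_of_nonpos (by linarith)]; linarith
      · rw [abs_of_pos (by linarith)]; linarith
    obtain ⟨hz1, hz2⟩ := hz (t, x) (Or.inr this)
    rw [hhd]; simp only [hz1, hz2, mul_zero, ContinuousLinearMap.zero_apply, add_zero]
  calc ∫ x : ℝ, (((Uprof (x/t))^2 + |Uprof (x/t)|) * fderiv ℝ θ (t, x) (0, 1)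
        + (- utd t x) * θ (t, x))
      = ∫ x in Ioc (-b) b, hd x := (setIntegral_eq_integral_of_forall_compl_eq_zero hcompl).symm
    _ = ∫ x in (-b)..b, hd x := (intervalIntegral.integral_of_le (by linarith)).symm
    _ = h b - h (-b) := key
    _ = 0 := by rw [hhb, hhb']; ring


lemma H_integrable {θ : ℝ × ℝ → ℝ} (hθc : Continuous θ) {b M : ℝ} (hb : 0 < b)
    (hM : ∀ p : ℝ × ℝ, |θ p| ≤ M) (hz : ∀ p : ℝ × ℝ, b ≤ |p.2| → θ p = 0) :
    Integrable (fun q : ℝ × ℝ => utd q.2 q.1 * θ (q.2, q.1))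
      (volume.prod (volume.restrict (Set.Ioi (0:ℝ)))) := by
  set ν : Measure ℝ := volume.restrict (Set.Ioi (0:ℝ)) with hν
  have hMnn : 0 ≤ M := le_trans (abs_nonneg _) (hM (0,0))
  have hmeas : AEStronglyMeasurable (fun q : ℝ × ℝ => utd q.2 q.1 * θ (q.2, q.1))
      (volume.prod ν) := by
    apply Measurable.aestronglyMeasurable
    apply Measurable.mul
    · unfold utd
      refine Measurable.ite ?_ (by fun_prop) measurable_const
      exact MeasurableSet.inter
        (measurableSet_lt measurable_snd measurable_fst.abs)
        (measurableSet_lt measurable_fst.abs (measurable_const.mul measurable_snd))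
    · exact (hθc.comp continuous_swap).measurable
  have hslice : ∀ x : ℝ, Integrable (fun t => utd t x * θ (t, x)) ν := by
    intro x
    by_cases hx : x = 0
    · subst hx
      have hz0 : ∀ t : ℝ, utd t 0 = 0 := by
        intro t; unfold utd; rw [if_neg]; push_neg; intro h2
        simp only [abs_zero] at h2 ⊢
        linarith
      simp only [hz0, zero_mul]
      exact integrable_zero _ _ _
    · apply Integrable.mono'
        (g := fun t => (Set.Ioc (0:ℝ) |x|).indicator (fun _ => 9/(2*|x|)*M) t)
      · exact (integrable_indicator_iff measurableSet_Ioc).2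
          (integrableOn_const measure_Ioc_lt_top.ne)
      · exact ((utd_measurable x).mul
          (hθc.comp (continuous_id.prodMk continuous_const)).measurable).aestronglyMeasurable
      · rw [hν, ae_restrict_iff' measurableSet_Ioi]
        apply Filter.Eventually.of_forall
        intro t ht
        simp only [Set.mem_Ioi] at ht
        by_cases hcond : t < |x| ∧ |x| < 3*t
        · rw [Set.indicator_of_mem (Set.mem_Ioc.2 ⟨ht, hcond.1.le⟩)]
          rw [Real.norm_eq_abs, abs_mul]
          exact mul_le_mul (utd_abs_le hx) (hM (t,x)) (abs_nonneg _) (by positivity)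
        · have : utd t x = 0 := by unfold utd; rw [if_neg hcond]
          rw [this, zero_mul, norm_zero]
          apply Set.indicator_nonneg
          intro y _; positivity
  rw [integrable_prod_iff hmeas]
  refine ⟨Filter.Eventually.of_forall hslice, ?_⟩
  apply Integrable.mono' (g := fun x => (Set.Icc (-b) b).indicator (fun _ => 5*M) x)
  · exact (integrable_indicator_iff measurableSet_Icc).2
      (integrableOn_const measure_Icc_lt_top.ne)
  · exact hmeas.norm.integral_prod_right'
  · apply Filter.Eventually.of_forall
    intro x
    by_cases hxb : |x| ≤ b
    · rw [Set.indicator_of_mem (Set.mem_Icc.2 (abs_le.1 hxb))]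
      rw [Real.norm_eq_abs, abs_of_nonneg (integral_nonneg (fun t => norm_nonneg _))]
      by_cases hx : x = 0
      · subst hx
        have hz0 : ∀ t : ℝ, utd t 0 = 0 := by
          intro t; unfold utd; rw [if_neg]; push_neg; intro h2
          simp only [abs_zero] at h2 ⊢
          linarith
        simp only [hz0, zero_mul, norm_zero, integral_zero]
        positivity
      · have hx' : 0 < |x| := abs_pos.2 hx
        calc ∫ t, ‖utd t x * θ (t, x)‖ ∂ν
            ≤ ∫ t, (Set.Ioc (0:ℝ) |x|).indicator (fun _ => 9/(2*|x|)*M) t ∂ν := by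
              refine integral_mono_ae (hslice x).norm
                ((integrable_indicator_iff measurableSet_Ioc).2
                  (integrableOn_const measure_Ioc_lt_top.ne))
                ((ae_restrict_iff' measurableSet_Ioi).2 ?_)
              apply Filter.Eventually.of_forall
              intro t ht
              simp only [Set.mem_Ioi] at ht
              simp only []
              by_cases hcond : t < |x| ∧ |x| < 3*t
              · rw [Set.indicator_of_mem (Set.mem_Ioc.2 ⟨ht, hcond.1.le⟩)]
                rw [Real.norm_eq_abs, abs_mul]
                exact mul_le_mul (utd_abs_le hx) (hM (t,x)) (abs_nonneg _) (by positivity)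
              · have : utd t x = 0 := by unfold utd; rw [if_neg hcond]
                rw [this, zero_mul, norm_zero]
                apply Set.indicator_nonneg
                intro y _; positivity
          _ = (ν (Set.Ioc (0:ℝ) |x|)).toReal • (9/(2*|x|)*M) :=
              integral_indicator_const _ measurableSet_Ioc
          _ ≤ 5*M := by
              have hν1 : ν (Set.Ioc (0:ℝ) |x|) = ENNReal.ofReal |x| := by
                rw [hν, Measure.restrict_apply measurableSet_Ioc]
                rw [Set.inter_eq_left.2 (Set.Ioc_subset_Ioi_self)]
                rw [Real.volume_Ioc, sub_zero]
              rw [hν1, ENNReal.toReal_ofReal (abs_nonneg x), smul_eq_mul]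
              rw [show |x| * (9/(2*|x|)*M) = 9/2*M by field_simp]
              linarith
    · rw [Set.indicator_of_notMem (by rw [Set.mem_Icc, ← abs_le]; exact hxb)]
      have hth : ∀ t : ℝ, θ (t, x) = 0 := fun t => hz (t, x) (le_of_not_ge hxb)
      simp only [hth, mul_zero, norm_zero, integral_zero, norm_zero, le_refl]

/-- For the flux `f u = u² + |u|` and initial datum `u₀ x = sign x`, the self-similar
function `u (t, x) = Uprof (x / t)` is a weak solution of `u_t + f(u)_x = 0`:
for every smooth compactly supported test function `θ`,
`∫∫_{t>0} (u θ_t + f(u) θ_x) + ∫ u₀(x) θ(0,x) dx = 0`. -/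
theorem stmt_10 (f : ℝ → ℝ) (hf : ∀ u : ℝ, f u = u ^ 2 + |u|)
    (u : ℝ → ℝ → ℝ) (hu : ∀ t x : ℝ, u t x = Uprof (x / t)) :
    ∀ θ : ℝ × ℝ → ℝ, ContDiff ℝ (⊤ : ℕ∞) θ → HasCompactSupport θ →
      (∫ x : ℝ, ∫ t in Set.Ioi (0:ℝ),
          (u t x * fderiv ℝ θ (t, x) (1, 0) + f (u t x) * fderiv ℝ θ (t, x) (0, 1)))
        + (∫ x : ℝ, Real.sign x * θ (0, x)) = 0 := by
  intro θ hθ hθc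
  -- support radius
  obtain ⟨r, hr⟩ := hθc.isBounded.subset_closedBall 0
  set b : ℝ := max r 0 + 1 with hbdef
  have hb : 0 < b := by positivity
  have hz : ∀ p : ℝ × ℝ, b ≤ |p.1| ∨ b ≤ |p.2| → θ p = 0 ∧ fderiv ℝ θ p = 0 := by
    intro p hp
    have hnorm : r < ‖p‖ := by
      rw [Prod.norm_def]
      rcases hp with h | h
      · calc r ≤ max r 0 := le_max_left r 0
          _ < b := by rw [hbdef]; linarith
          _ ≤ ‖p.1‖ := by rwa [Real.norm_eq_abs]
          _ ≤ max ‖p.1‖ ‖p.2‖ := le_max_left _ _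
      · calc r ≤ max r 0 := le_max_left r 0
          _ < b := by rw [hbdef]; linarith
          _ ≤ ‖p.2‖ := by rwa [Real.norm_eq_abs]
          _ ≤ max ‖p.1‖ ‖p.2‖ := le_max_right _ _
    have hnm : p ∉ tsupport θ := by
      intro hmem
      have := hr hmem
      rw [Metric.mem_closedBall, dist_zero_right] at this
      linarith
    exact ⟨image_eq_zero_of_notMem_tsupport hnm,
      image_eq_zero_of_notMem_tsupport (fun hmem => hnm (tsupport_fderiv_subset ℝ hmem))⟩
  -- uniform bounds
  obtain ⟨M₁, hM₁⟩ := hθc.exists_bound_of_continuous hθ.continuous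
  obtain ⟨M₂, hM₂⟩ := (hθc.fderiv ℝ).exists_bound_of_continuous (hθ.continuous_fderiv (by simp))
  set M : ℝ := M₁ + M₂ with hMdef
  have hM₁nn : 0 ≤ M₁ := le_trans (norm_nonneg _) (hM₁ (0,0))
  have hM₂nn : 0 ≤ M₂ := le_trans (norm_nonneg _) (hM₂ (0,0))
  have hM : ∀ p : ℝ × ℝ, |θ p| ≤ M ∧ ‖fderiv ℝ θ p‖ ≤ M := by
    intro p
    constructor
    · calc |θ p| = ‖θ p‖ := (Real.norm_eq_abs _).symm
        _ ≤ M₁ := hM₁ p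
        _ ≤ M := by rw [hMdef]; linarith
    · calc ‖fderiv ℝ θ p‖ ≤ M₂ := hM₂ p
        _ ≤ M := by rw [hMdef]; linarith
  have hMnn : 0 ≤ M := by rw [hMdef]; linarith
  set ν : Measure ℝ := volume.restrict (Set.Ioi (0:ℝ)) with hν
  -- the two halves of the integrand
  set F : ℝ × ℝ → ℝ := fun q =>
    ((Uprof (q.1/q.2))^2 + |Uprof (q.1/q.2)|) * fderiv ℝ θ (q.2, q.1) (0, 1)
      + (- utd q.2 q.1) * θ (q.2, q.1) with hF
  -- slice integrability of the G-part
  have hGint : ∀ x : ℝ, Integrable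
      (fun t => Uprof (x/t) * fderiv ℝ θ (t, x) (1, 0) + utd t x * θ (t, x)) ν := by
    intro x
    by_cases hx : x = 0
    · subst hx
      have h0 : ∀ t : ℝ, Uprof (0/t) * fderiv ℝ θ (t, (0:ℝ)) (1, 0) + utd t 0 * θ (t, 0) = 0 := by
        intro t
        have h1 : Uprof (0/t) = 0 := by
          rw [zero_div]; exact Uprof_center (by norm_num) (by norm_num)
        have h2 : utd t 0 = 0 := by
          unfold utd; rw [if_neg]; push_neg; intro h2
          simp only [abs_zero] at h2 ⊢; linarith
        rw [h1, h2, zero_mul, zero_mul, add_zero]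
      simp only [h0]
      exact integrable_zero _ _ _
    · have hx' : 0 < |x| := abs_pos.2 hx
      apply Integrable.mono'
        (g := fun t => (Set.Ioc (0:ℝ) b).indicator (fun _ => M + 9/(2*|x|)*M) t)
      · exact (integrable_indicator_iff measurableSet_Ioc).2
          (integrableOn_const measure_Ioc_lt_top.ne)
      · apply Measurable.aestronglyMeasurable
        apply Measurable.add
        · exact (Uprof_continuous.measurable.comp (measurable_const.div measurable_id)).mul
            (((hθ.continuous_fderiv (by simp)).comp
              (continuous_id.prodMk continuous_const)).clm_apply continuous_const).measurable
        · exact (utd_measurable x).mul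
            (hθ.continuous.comp (continuous_id.prodMk continuous_const)).measurable
      · rw [hν, ae_restrict_iff' measurableSet_Ioi]
        apply Filter.Eventually.of_forall
        intro t ht
        simp only [Set.mem_Ioi] at ht
        by_cases htb : t ≤ b
        · rw [Set.indicator_of_mem (Set.mem_Ioc.2 ⟨ht, htb⟩)]
          have h1 : |fderiv ℝ θ (t, x) (1, 0)| ≤ M := by
            rw [← Real.norm_eq_abs]
            calc ‖fderiv ℝ θ (t, x) (1, 0)‖ ≤ ‖fderiv ℝ θ (t, x)‖ * ‖((1:ℝ), (0:ℝ))‖ :=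
                  ContinuousLinearMap.le_opNorm _ _
              _ ≤ M * 1 := by
                  apply mul_le_mul (hM (t, x)).2 _ (norm_nonneg _) hMnn
                  rw [Prod.norm_def]; norm_num
              _ = M := mul_one M
          rw [Real.norm_eq_abs]
          calc |Uprof (x/t) * fderiv ℝ θ (t, x) (1, 0) + utd t x * θ (t, x)|
              ≤ |Uprof (x/t) * fderiv ℝ θ (t, x) (1, 0)| + |utd t x * θ (t, x)| := abs_add_le _ _
            _ ≤ 1 * M + 9/(2*|x|) * M := by
                apply add_le_add
                · rw [abs_mul]
                  exact mul_le_mul (Uprof_abs_le _) h1 (abs_nonneg _) zero_le_one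
                · rw [abs_mul]
                  exact mul_le_mul (utd_abs_le hx) (hM (t,x)).1 (abs_nonneg _) (by positivity)
            _ = M + 9/(2*|x|)*M := by ring
        · obtain ⟨hz1, hz2⟩ := hz (t, x)
            (Or.inl (by rw [abs_of_pos ht]; linarith))
          rw [Set.indicator_of_notMem (by rw [Set.mem_Ioc]; push_neg; intro; linarith)]
          rw [hz1, hz2, mul_zero, ContinuousLinearMap.zero_apply, mul_zero, add_zero,
            norm_zero]
  -- product integrability of F
  have hF1int : Integrable (fun q : ℝ × ℝ =>
      ((Uprof (q.1/q.2))^2 + |Uprof (q.1/q.2)|) * fderiv ℝ θ (q.2, q.1) (0, 1))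
      (volume.prod ν) := by
    apply Integrable.mono'
      (g := fun q : ℝ × ℝ => (Set.Icc (-b) b ×ˢ Set.Icc (-b) b).indicator (fun _ => 2*M) q)
    · refine (integrable_indicator_iff (measurableSet_Icc.prod measurableSet_Icc)).2
        (integrableOn_const (lt_top_iff_ne_top.1 ?_))
      rw [Measure.prod_prod]
      exact ENNReal.mul_lt_top measure_Icc_lt_top
        (lt_of_le_of_lt (Measure.restrict_apply_le _ _) measure_Icc_lt_top)
    · apply Measurable.aestronglyMeasurable
      have hUm : Measurable (fun q : ℝ × ℝ => Uprof (q.1/q.2)) :=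
        Uprof_continuous.measurable.comp (measurable_fst.div measurable_snd)
      exact ((hUm.pow_const 2).add hUm.abs).mul
        (((hθ.continuous_fderiv (by simp)).comp
          continuous_swap).clm_apply continuous_const).measurable
    · apply Filter.Eventually.of_forall
      intro q
      by_cases hq : q ∈ Set.Icc (-b) b ×ˢ Set.Icc (-b) b
      · rw [Set.indicator_of_mem hq]
        have h1 : |fderiv ℝ θ (q.2, q.1) (0, 1)| ≤ M := by
          rw [← Real.norm_eq_abs]
          calc ‖fderiv ℝ θ (q.2, q.1) (0, 1)‖
              ≤ ‖fderiv ℝ θ (q.2, q.1)‖ * ‖((0:ℝ), (1:ℝ))‖ :=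
                ContinuousLinearMap.le_opNorm _ _
            _ ≤ M * 1 := by
                apply mul_le_mul (hM (q.2, q.1)).2 _ (norm_nonneg _) hMnn
                rw [Prod.norm_def]; norm_num
            _ = M := mul_one M
        have h2 : abs ((Uprof (q.1/q.2))^2 + |Uprof (q.1/q.2)|) ≤ 2 := by
          have := Uprof_abs_le (q.1/q.2)
          rw [abs_of_nonneg (by positivity)]
          nlinarith [abs_nonneg (Uprof (q.1/q.2)), sq_abs (Uprof (q.1/q.2))]
        rw [Real.norm_eq_abs, abs_mul]
        exact mul_le_mul h2 h1 (abs_nonneg _) (by norm_num)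
      · rw [Set.indicator_of_notMem hq]
        have hor : b ≤ |q.2| ∨ b ≤ |q.1| := by
          by_contra hcon
          push_neg at hcon
          obtain ⟨h1, h2⟩ := hcon
          rw [abs_lt] at h1 h2
          exact hq ⟨Set.mem_Icc.2 ⟨h2.1.le, h2.2.le⟩, Set.mem_Icc.2 ⟨h1.1.le, h1.2.le⟩⟩
        obtain ⟨hz1, hz2⟩ := hz (q.2, q.1)
          (by rcases hor with h | h; exacts [Or.inl h, Or.inr h])
        rw [hz2, ContinuousLinearMap.zero_apply, mul_zero, norm_zero]
  have hHint := H_integrable hθ.continuous hb (fun p => (hM p).1)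
    (fun p hp => (hz p (Or.inr hp)).1)
  have hFint : Integrable F (volume.prod ν) := by
    rw [hF]
    have : (fun q : ℝ × ℝ =>
        ((Uprof (q.1/q.2))^2 + |Uprof (q.1/q.2)|) * fderiv ℝ θ (q.2, q.1) (0, 1)
          + (- utd q.2 q.1) * θ (q.2, q.1))
        = (fun q : ℝ × ℝ =>
        ((Uprof (q.1/q.2))^2 + |Uprof (q.1/q.2)|) * fderiv ℝ θ (q.2, q.1) (0, 1)
          - utd q.2 q.1 * θ (q.2, q.1)) := by
      funext q; ring
    rw [this]
    exact hF1int.sub hHint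
  -- evaluation of the G-part integral via time_FTC
  have hA : ∀ x : ℝ,
      (∫ t in Set.Ioi (0:ℝ), (Uprof (x/t) * fderiv ℝ θ (t, x) (1, 0) + utd t x * θ (t, x)))
        = -(Real.sign x * θ (0, x)) := by
    intro x
    by_cases hx : x = 0
    · subst hx
      have h0 : ∀ t : ℝ, Uprof (0/t) * fderiv ℝ θ (t, (0:ℝ)) (1, 0) + utd t 0 * θ (t, 0) = 0 := by
        intro t
        have h1 : Uprof (0/t) = 0 := by
          rw [zero_div]; exact Uprof_center (by norm_num) (by norm_num)
        have h2 : utd t 0 = 0 := by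
          unfold utd; rw [if_neg]; push_neg; intro h2
          simp only [abs_zero] at h2 ⊢; linarith
        rw [h1, h2, zero_mul, zero_mul, add_zero]
      simp only [h0, integral_zero, Real.sign_zero, zero_mul, neg_zero]
    · exact time_FTC hθ hb hM hz hx
  have hAint : Integrable (fun x : ℝ => -(Real.sign x * θ (0, x))) volume := by
    apply Integrable.neg
    apply Integrable.mono' (g := fun x => (Set.Icc (-b) b).indicator (fun _ => M) x)
    · exact (integrable_indicator_iff measurableSet_Icc).2
        (integrableOn_const measure_Icc_lt_top.ne)
    · have hsm : Measurable Real.sign := by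
        unfold Real.sign
        exact Measurable.ite (measurableSet_lt measurable_id measurable_const) measurable_const
          (Measurable.ite (measurableSet_lt measurable_const measurable_id) measurable_const
            measurable_const)
      exact (hsm.mul
        (hθ.continuous.comp (continuous_const.prodMk continuous_id)).measurable).aestronglyMeasurable
    · apply Filter.Eventually.of_forall
      intro x
      by_cases hxb : |x| ≤ b
      · rw [Set.indicator_of_mem (Set.mem_Icc.2 (abs_le.1 hxb))]
        rw [Real.norm_eq_abs, abs_mul]
        have hs1 : |Real.sign x| ≤ 1 := by
          rcases lt_trichotomy x 0 with h | h | h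
          · rw [Real.sign_of_neg h]; norm_num
          · rw [h, Real.sign_zero]; norm_num
          · rw [Real.sign_of_pos h]; norm_num
        calc |Real.sign x| * |θ (0, x)| ≤ 1 * M :=
              mul_le_mul hs1 (hM (0,x)).1 (abs_nonneg _) zero_le_one
          _ = M := one_mul M
      · rw [Set.indicator_of_notMem (by rw [Set.mem_Icc, ← abs_le]; exact hxb)]
        simp [(hz (0, x) (Or.inr (le_of_not_ge hxb))).1]
  have hBint : Integrable (fun x : ℝ => ∫ t, F (x, t) ∂ν) volume :=
    hFint.integral_prod_left
  -- main computation
  have hmain : (∫ x : ℝ, ∫ t in Set.Ioi (0:ℝ),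
      (u t x * fderiv ℝ θ (t, x) (1, 0) + f (u t x) * fderiv ℝ θ (t, x) (0, 1)))
      = (∫ x : ℝ, -(Real.sign x * θ (0, x))) + ∫ x : ℝ, ∫ t, F (x, t) ∂ν := by
    have step1 : (∫ x : ℝ, ∫ t in Set.Ioi (0:ℝ),
        (u t x * fderiv ℝ θ (t, x) (1, 0) + f (u t x) * fderiv ℝ θ (t, x) (0, 1)))
        = ∫ x : ℝ, ((∫ t in Set.Ioi (0:ℝ),
            (Uprof (x/t) * fderiv ℝ θ (t, x) (1, 0) + utd t x * θ (t, x)))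
          + ∫ t, F (x, t) ∂ν) := by
      apply integral_congr_ae
      filter_upwards [hFint.prod_right_ae] with x hFx
      have hptw : (fun t => u t x * fderiv ℝ θ (t, x) (1, 0)
          + f (u t x) * fderiv ℝ θ (t, x) (0, 1))
          = fun t => (Uprof (x/t) * fderiv ℝ θ (t, x) (1, 0) + utd t x * θ (t, x))
              + F (x, t) := by
        funext t
        rw [hu t x, hf (Uprof (x/t)), hF]
        ring
      rw [hptw]
      exact integral_add (hGint x) hFx
    rw [step1]
    have step2 : (fun x : ℝ => (∫ t in Set.Ioi (0:ℝ),
        (Uprof (x/t) * fderiv ℝ θ (t, x) (1, 0) + utd t x * θ (t, x)))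
          + ∫ t, F (x, t) ∂ν)
        = fun x : ℝ => (-(Real.sign x * θ (0, x))) + ∫ t, F (x, t) ∂ν := by
      funext x; rw [hA x]
    rw [step2]
    exact integral_add hAint hBint
  -- the F-part vanishes after swapping the order of integration
  have hswap : (∫ x : ℝ, ∫ t, F (x, t) ∂ν) = 0 := by
    have huncurry : Function.uncurry (fun x t => F (x, t)) = F := by
      funext q; rfl
    have := integral_integral_swap (f := fun x t => F (x, t))
      (μ := (volume : Measure ℝ)) (ν := ν) (huncurry ▸ hFint)
    rw [this]
    have hzero : ∀ t ∈ Set.Ioi (0:ℝ), (∫ x : ℝ, F (x, t)) = 0 := by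
      intro t ht
      simp only [Set.mem_Ioi] at ht
      have := space_FTC hθ hb hM hz ht
      rw [hF]
      exact this
    rw [hν]
    calc (∫ t in Set.Ioi (0:ℝ), ∫ x : ℝ, F (x, t))
        = ∫ t in Set.Ioi (0:ℝ), (0:ℝ) := setIntegral_congr_fun measurableSet_Ioi hzero
      _ = 0 := integral_zero _ _
  rw [hmain, hswap, add_zero, integral_neg]
  ring
end

section
/- Let a : [-M,M] → ℝ be strictly increasing with left/right limits a⁻ ≤ a⁺ and generalized inverse b, and u_l < u_r in [-M,M]. For n ≥ 1 define v_i = u_l + (i/n)(u_r − u_l), let a_n be the piecewise linear interpolation with a_n(v_i) = ā(v_i) := (a⁻(v_i)+a⁺(v_i))/2, and let b_n be the inverse of a_n. Then for every ξ ∈ a([-M,M]) ∩ [ā(u_l), ā(u_r)], |b_n(ξ) − b(ξ)| ≤ (u_r − u_l)/n; in particular b_n → b uniformly on bounded subsets of this set. -/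
lemma stmt_13_find (f : ℕ → ℝ) (ξ : ℝ) : ∀ n : ℕ, 1 ≤ n → f 0 ≤ ξ → ξ ≤ f n →
    ∃ i, i < n ∧ f i ≤ ξ ∧ ξ ≤ f (i + 1) := by
  intro n
  induction n with
  | zero => intro h; omega
  | succ m ih =>
    intro _ h0 h1
    rcases le_or_gt ξ (f m) with h | h
    · rcases Nat.eq_zero_or_pos m with rfl | hm
      · exact ⟨0, by omega, h0, h1⟩
      · obtain ⟨i, hi, h⟩ := ih hm h0 h
        exact ⟨i, by omega, h⟩
    · exact ⟨m, by omega, h.le, h1⟩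

/-- Convergence of the piecewise linear approximations of the generalized inverse:
with `v i = u_l + (i/n)(u_r - u_l)`, `a_n` the piecewise linear interpolation of
`ā = (a⁻ + a⁺)/2` at the points `v i`, `b_n` the inverse of `a_n` and `b` the generalized
inverse of `a`, one has `|b_n ξ - b ξ| ≤ (u_r - u_l)/n` for every
`ξ ∈ a([-M,M]) ∩ [ā u_l, ā u_r]`; in particular `b_n → b` uniformly there. -/
theorem stmt_13 (M : ℝ) (hM : 0 < M) (a am ap : ℝ → ℝ)
    (ha : StrictMonoOn a (Set.Icc (-M) M))
    (ham : ∀ w ∈ Set.Ioc (-M) M,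
      Filter.Tendsto a (nhdsWithin w (Set.Icc (-M) M ∩ Set.Iio w)) (nhds (am w)))
    (ham0 : am (-M) = a (-M))
    (hap : ∀ w ∈ Set.Ico (-M) M,
      Filter.Tendsto a (nhdsWithin w (Set.Icc (-M) M ∩ Set.Ioi w)) (nhds (ap w)))
    (hap0 : ap M = a M)
    (abar : ℝ → ℝ) (habar : ∀ w : ℝ, abar w = (ap w + am w) / 2)
    (ul ur : ℝ) (hul : ul ∈ Set.Icc (-M) M) (hur : ur ∈ Set.Icc (-M) M) (hlr : ul < ur)
    (n : ℕ) (hn : 1 ≤ n)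
    (v : ℕ → ℝ) (hv : ∀ i : ℕ, v i = ul + ((i : ℝ) / n) * (ur - ul))
    (an bn : ℝ → ℝ)
    (hlin : ∀ i < n, ∀ x ∈ Set.Icc (v i) (v (i + 1)),
      an x = abar (v i) +
        (abar (v (i + 1)) - abar (v i)) / (v (i + 1) - v i) * (x - v i))
    (hbn : ∀ x ∈ Set.Icc ul ur, bn (an x) = x)
    (hbn' : ∀ ξ ∈ Set.Icc (abar ul) (abar ur), an (bn ξ) = ξ)
    (b : ℝ → ℝ) (hb : ∀ y : ℝ, b y = sInf {x : ℝ | x ∈ Set.Icc (-M) M ∧ y ≤ a x}) :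
    ∀ ξ ∈ a '' Set.Icc (-M) M ∩ Set.Icc (abar ul) (abar ur),
      |bn ξ - b ξ| ≤ (ur - ul) / n := by
  have hn0 : (n : ℝ) ≠ 0 := Nat.cast_ne_zero.2 (by omega)
  have hnpos : (0 : ℝ) < n := Nat.cast_pos.2 (by omega)
  set d : ℝ := (ur - ul) / n with hd
  have hdpos : 0 < d := div_pos (by linarith) hnpos
  have hv0 : v 0 = ul := by rw [hv]; norm_num
  have hvn : v n = ur := by rw [hv, div_self hn0]; ring
  have hvstep : ∀ i : ℕ, v (i + 1) - v i = d := by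
    intro i; rw [hv (i + 1), hv i, hd]; push_cast; field_simp; ring
  have hvmono : ∀ i j : ℕ, i ≤ j → v i ≤ v j := by
    intro i j hij
    rw [hv i, hv j]
    have hc : (i : ℝ) ≤ j := Nat.cast_le.2 hij
    have h1 : (i : ℝ) / n ≤ (j : ℝ) / n := by gcongr
    linarith [mul_le_mul_of_nonneg_right h1 (by linarith : (0:ℝ) ≤ ur - ul)]
  have hvIcc : ∀ i : ℕ, i ≤ n → v i ∈ Set.Icc ul ur := fun i hi =>
    ⟨hv0 ▸ hvmono 0 i (by omega), hvn ▸ hvmono i n hi⟩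
  have hIccsub : Set.Icc ul ur ⊆ Set.Icc (-M) M := Set.Icc_subset_Icc hul.1 hur.2
  -- left-limit lower bound
  have L1 : ∀ w ∈ Set.Icc (-M) M, ∀ x ∈ Set.Icc (-M) M, x < w → a x ≤ am w := by
    intro w hw x hx hxw
    have hwM : -M < w := lt_of_le_of_lt hx.1 hxw
    have hT := ham w ⟨hwM, hw.2⟩
    have hsub : Set.Ioo x w ⊆ Set.Icc (-M) M ∩ Set.Iio w := fun z hz =>
      ⟨⟨le_trans hx.1 hz.1.le, le_trans hz.2.le hw.2⟩, hz.2⟩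
    have hcl : w ∈ closure (Set.Ioo x w) := by
      rw [closure_Ioo hxw.ne]; exact ⟨hxw.le, le_rfl⟩
    have hne : (nhdsWithin w (Set.Icc (-M) M ∩ Set.Iio w)).NeBot :=
      (mem_closure_iff_nhdsWithin_neBot.1 hcl).mono (nhdsWithin_mono w hsub)
    refine ge_of_tendsto hT ?_
    filter_upwards [self_mem_nhdsWithin,
      mem_nhdsWithin_of_mem_nhds (Ioi_mem_nhds hxw)] with z hz hxz
    exact (ha hx hz.1 hxz).le
  -- right-limit upper bound
  have L2 : ∀ w ∈ Set.Icc (-M) M, ∀ x ∈ Set.Icc (-M) M, w < x → ap w ≤ a x := by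
    intro w hw x hx hwx
    have hwM : w < M := lt_of_lt_of_le hwx hx.2
    have hT := hap w ⟨hw.1, hwM⟩
    have hsub : Set.Ioo w x ⊆ Set.Icc (-M) M ∩ Set.Ioi w := fun z hz =>
      ⟨⟨le_trans hw.1 hz.1.le, le_trans hz.2.le hx.2⟩, hz.1⟩
    have hcl : w ∈ closure (Set.Ioo w x) := by
      rw [closure_Ioo hwx.ne]; exact ⟨le_rfl, hwx.le⟩
    have hne : (nhdsWithin w (Set.Icc (-M) M ∩ Set.Ioi w)).NeBot :=
      (mem_closure_iff_nhdsWithin_neBot.1 hcl).mono (nhdsWithin_mono w hsub)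
    refine le_of_tendsto hT ?_
    filter_upwards [self_mem_nhdsWithin,
      mem_nhdsWithin_of_mem_nhds (Iio_mem_nhds hwx)] with z hz hxz
    exact (ha hz.1 hx hxz).le
  -- am w ≤ a w
  have L3 : ∀ w ∈ Set.Icc (-M) M, am w ≤ a w := by
    intro w hw
    rcases eq_or_lt_of_le hw.1 with heq | hlt
    · rw [← heq, ham0]
    · have hT := ham w ⟨hlt, hw.2⟩
      have hsub : Set.Ioo (-M) w ⊆ Set.Icc (-M) M ∩ Set.Iio w := fun z hz =>
        ⟨⟨hz.1.le, le_trans hz.2.le hw.2⟩, hz.2⟩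
      have hcl : w ∈ closure (Set.Ioo (-M) w) := by
        rw [closure_Ioo hlt.ne]; exact ⟨hlt.le, le_rfl⟩
      have hne : (nhdsWithin w (Set.Icc (-M) M ∩ Set.Iio w)).NeBot :=
        (mem_closure_iff_nhdsWithin_neBot.1 hcl).mono (nhdsWithin_mono w hsub)
      refine le_of_tendsto hT ?_
      filter_upwards [self_mem_nhdsWithin] with z hz
      exact (ha hz.1 hw hz.2).le
  -- a w ≤ ap w
  have L4 : ∀ w ∈ Set.Icc (-M) M, a w ≤ ap w := by
    intro w hw
    rcases eq_or_lt_of_le hw.2 with heq | hlt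
    · rw [heq, hap0]
    · have hT := hap w ⟨hw.1, hlt⟩
      have hsub : Set.Ioo w M ⊆ Set.Icc (-M) M ∩ Set.Ioi w := fun z hz =>
        ⟨⟨le_trans hw.1 hz.1.le, hz.2.le⟩, hz.1⟩
      have hcl : w ∈ closure (Set.Ioo w M) := by
        rw [closure_Ioo hlt.ne]; exact ⟨le_rfl, hlt.le⟩
      have hne : (nhdsWithin w (Set.Icc (-M) M ∩ Set.Ioi w)).NeBot :=
        (mem_closure_iff_nhdsWithin_neBot.1 hcl).mono (nhdsWithin_mono w hsub)
      refine ge_of_tendsto hT ?_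
      filter_upwards [self_mem_nhdsWithin] with z hz
      exact (ha hw hz.1 hz.2).le
  have L5 : ∀ w ∈ Set.Icc (-M) M, am w ≤ abar w ∧ abar w ≤ ap w := by
    intro w hw
    have h3 := L3 w hw; have h4 := L4 w hw
    rw [habar]; constructor <;> linarith
  have Sstep : ∀ i, i < n → abar (v i) < abar (v (i + 1)) := by
    intro i hi
    have hvi := hIccsub (hvIcc i (by omega))
    have hvi1 := hIccsub (hvIcc (i + 1) (by omega))
    have hstep := hvstep i
    have hw1 : v i + d / 3 ∈ Set.Icc (-M) M := ⟨by linarith [hvi.1], by linarith [hvi1.2]⟩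
    have hw2 : v i + 2 * d / 3 ∈ Set.Icc (-M) M := ⟨by linarith [hvi.1], by linarith [hvi1.2]⟩
    have h1 : ap (v i) ≤ a (v i + d / 3) := L2 _ hvi _ hw1 (by linarith)
    have h2 : a (v i + d / 3) < a (v i + 2 * d / 3) := ha hw1 hw2 (by linarith)
    have h3 : a (v i + 2 * d / 3) ≤ am (v (i + 1)) := L1 _ hvi1 _ hw2 (by linarith)
    have l5 := L5 _ hvi
    have l5' := L5 _ hvi1
    linarith [l5.2, l5'.1]
  rintro ξ ⟨⟨x0, hx0, rfl⟩, hξl, hξr⟩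
  have hbval : b (a x0) = x0 := by
    rw [hb]
    apply le_antisymm
    · exact csInf_le ⟨-M, fun y hy => hy.1.1⟩ ⟨hx0, le_rfl⟩
    · refine le_csInf ⟨x0, hx0, le_rfl⟩ ?_
      rintro y ⟨hy, hay⟩
      by_contra h
      push_neg at h
      exact absurd hay (not_le.2 (ha hy hx0 h))
  obtain ⟨i, hin, hξ1, hξ2⟩ := stmt_13_find (fun j => abar (v j)) (a x0) n hn
    (by simpa only [hv0] using hξl) (by simpa only [hvn] using hξr)
  have hΔ : 0 < abar (v (i + 1)) - abar (v i) := sub_pos.2 (Sstep i hin)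
  set Δ : ℝ := abar (v (i + 1)) - abar (v i) with hΔdef
  set x : ℝ := v i + (a x0 - abar (v i)) / Δ * d with hxdef
  have hxlow : v i ≤ x := by
    have : 0 ≤ (a x0 - abar (v i)) / Δ * d :=
      mul_nonneg (div_nonneg (by linarith) hΔ.le) hdpos.le
    rw [hxdef]; linarith
  have hxhigh : x ≤ v (i + 1) := by
    have h1 : (a x0 - abar (v i)) / Δ ≤ 1 := (div_le_one hΔ).2 (by rw [hΔdef]; linarith)
    have h2 : (a x0 - abar (v i)) / Δ * d ≤ d := by nlinarith
    have := hvstep i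
    rw [hxdef]; linarith
  have hanx : an x = a x0 := by
    rw [hlin i hin x ⟨hxlow, hxhigh⟩, hvstep i, hxdef]
    have hΔne : Δ ≠ 0 := hΔ.ne'
    have hdne : d ≠ 0 := hdpos.ne'
    rw [← hΔdef]
    field_simp
    ring
  have hxul : x ∈ Set.Icc ul ur :=
    ⟨le_trans (hvIcc i (by omega)).1 hxlow, le_trans hxhigh (hvIcc (i + 1) (by omega)).2⟩
  have hbnx : bn (a x0) = x := by rw [← hanx, hbn x hxul]
  have hviM := hIccsub (hvIcc i (by omega))
  have hvi1M := hIccsub (hvIcc (i + 1) (by omega))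
  have hx0low : v i ≤ x0 := by
    by_contra h
    push_neg at h
    have hx' : (x0 + v i) / 2 ∈ Set.Icc (-M) M := ⟨by linarith [hx0.1], by linarith [hviM.2]⟩
    have h1 : a x0 < a ((x0 + v i) / 2) := ha hx0 hx' (by linarith)
    have h2 : a ((x0 + v i) / 2) ≤ am (v i) := L1 _ hviM _ hx' (by linarith)
    have h3 := (L5 _ hviM).1
    linarith
  have hx0high : x0 ≤ v (i + 1) := by
    by_contra h
    push_neg at h
    have hx' : (v (i + 1) + x0) / 2 ∈ Set.Icc (-M) M :=
      ⟨by linarith [hvi1M.1], by linarith [hx0.2]⟩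
    have h1 : a ((v (i + 1) + x0) / 2) < a x0 := ha hx' hx0 (by linarith)
    have h2 : ap (v (i + 1)) ≤ a ((v (i + 1) + x0) / 2) := L2 _ hvi1M _ hx' (by linarith)
    have h3 := (L5 _ hvi1M).2
    linarith
  rw [hbnx, hbval, abs_le]
  have hstep := hvstep i
  constructor
  · linarith
  · linarith
end

section
/- Let f : ℝ → ℝ be convex and u_l > u_r. Define s = (f(u_r) − f(u_l))/(u_r − u_l). Then the shock function u(t,x) = u_l for x < s t, u(t,x) = u_r for x > s t satisfies the Kruzkov entropy inequalities: for every convex C¹ entropy η with flux F = ∫ f'(v) η'(v) dv, and every nonnegative θ ∈ C_c^∞((0,∞)×ℝ), ∫∫ [η(u) θ_t + F(u) θ_x] dt dx ≥ 0. -/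
open MeasureTheory Set

noncomputable def rdf (f : ℝ → ℝ) (x : ℝ) : ℝ := sInf (slope f x '' Set.Ioi x)

lemma slope_mono_univ {f : ℝ → ℝ} (hf : ConvexOn ℝ Set.univ f) (x : ℝ) :
    MonotoneOn (slope f x) (Set.univ \ {x}) := hf.slope_mono (Set.mem_univ x)

lemma rdf_bddBelow {f : ℝ → ℝ} (hf : ConvexOn ℝ Set.univ f) (x : ℝ) :
    BddBelow (slope f x '' Set.Ioi x) := by
  refine ⟨slope f x (x - 1), ?_⟩
  rintro z ⟨y, hy, rfl⟩
  have hy' : x < y := hy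
  exact slope_mono_univ hf x ⟨trivial, by simp⟩ ⟨trivial, by simp [ne_of_gt hy']⟩
    (by linarith)

lemma rdf_le_slope {f : ℝ → ℝ} (hf : ConvexOn ℝ Set.univ f) {x y : ℝ} (hxy : x < y) :
    rdf f x ≤ slope f x y :=
  csInf_le (rdf_bddBelow hf x) (Set.mem_image_of_mem _ hxy)

lemma slope_le_rdf {f : ℝ → ℝ} (hf : ConvexOn ℝ Set.univ f) {x y : ℝ} (hxy : x < y) :
    slope f x y ≤ rdf f y := by
  refine le_csInf (by exact ⟨_, Set.mem_image_of_mem _ (lt_add_one y)⟩) ?_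
  rintro z ⟨w, hw, rfl⟩
  have hw' : y < w := hw
  have : slope f y x ≤ slope f y w :=
    slope_mono_univ hf y ⟨trivial, by simp [ne_of_lt hxy]⟩ ⟨trivial, by simp [ne_of_gt hw']⟩
      (by linarith)
  rwa [slope_comm] at this

lemma rdf_mono {f : ℝ → ℝ} (hf : ConvexOn ℝ Set.univ f) : Monotone (rdf f) := by
  intro x y hxy
  rcases eq_or_lt_of_le hxy with rfl | h
  · exact le_rfl
  · exact (rdf_le_slope hf h).trans (slope_le_rdf hf h)

lemma rdf_hasDerivWithinAt {f : ℝ → ℝ} (hf : ConvexOn ℝ Set.univ f) (x : ℝ) :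
    HasDerivWithinAt f (rdf f x) (Set.Ioi x) x := by
  rw [hasDerivWithinAt_iff_tendsto_slope' (by simp : x ∉ Set.Ioi x)]
  exact MonotoneOn.tendsto_nhdsGT
    ((slope_mono_univ hf x).mono (fun y hy => ⟨trivial, by simp [ne_of_gt (Set.mem_Ioi.1 hy)]⟩))
    (rdf_bddBelow hf x)

lemma convex_continuous {f : ℝ → ℝ} (hf : ConvexOn ℝ Set.univ f) : Continuous f := by
  rw [← continuousOn_univ]
  exact hf.continuousOn isOpen_univ

lemma integral_rdf {f : ℝ → ℝ} (hf : ConvexOn ℝ Set.univ f) {a b : ℝ} (hab : a ≤ b) :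
    ∫ w in a..b, rdf f w = f b - f a :=
  intervalIntegral.integral_eq_sub_of_hasDeriv_right_of_le hab
    (convex_continuous hf).continuousOn
    (fun x _ => rdf_hasDerivWithinAt hf x)
    ((rdf_mono hf).intervalIntegrable)

lemma ae_differentiable {f : ℝ → ℝ} (hf : ConvexOn ℝ Set.univ f) :
    ∀ᵐ w : ℝ, DifferentiableAt ℝ f w := by
  have hcont := convex_continuous hf
  have H : ∀ n : ℕ, ∀ᵐ w : ℝ, w ∈ Metric.ball (0:ℝ) (n+1) → DifferentiableAt ℝ f w := by
    intro n
    have hfb : ConvexOn ℝ (Metric.ball (0:ℝ) (n+2)) f :=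
      hf.subset (Set.subset_univ _) (convex_ball _ _)
    have hbd : Bornology.IsBounded (f '' Metric.ball (0:ℝ) (n+2)) := by
      refine (((isCompact_closedBall (0:ℝ) (n+2)).image hcont).isBounded).subset ?_
      exact Set.image_mono Metric.ball_subset_closedBall
    obtain ⟨K, hK⟩ := hfb.exists_lipschitzOnWith_of_isBounded
      (by linarith : (n:ℝ)+1 < (n:ℝ)+2) hbd
    filter_upwards [hK.ae_differentiableWithinAt_of_mem] with w hw hmem
    exact (hw hmem).differentiableAt (Metric.isOpen_ball.mem_nhds hmem)
  rw [← MeasureTheory.ae_all_iff] at H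
  filter_upwards [H] with w hw
  obtain ⟨n, hn⟩ := exists_nat_gt |w|
  exact hw n (by simp [Metric.mem_ball, Real.dist_eq]; linarith)

lemma deriv_ae_eq_rdf {f : ℝ → ℝ} (hf : ConvexOn ℝ Set.univ f) :
    ∀ᵐ w : ℝ, deriv f w = rdf f w := by
  filter_upwards [ae_differentiable hf] with w hw
  have h1 := (hw.hasDerivAt.hasDerivWithinAt (s := Set.Ioi w)).derivWithin
    (uniqueDiffWithinAt_Ioi w)
  have h2 := (rdf_hasDerivWithinAt hf w).derivWithin (uniqueDiffWithinAt_Ioi w)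
  rw [← h1, ← h2]

lemma entropy_key {f : ℝ → ℝ} (hf : ConvexOn ℝ Set.univ f)
    {ul ur : ℝ} (hlr : ur < ul) {s : ℝ} (hs : s = (f ur - f ul) / (ur - ul))
    {η : ℝ → ℝ} (hη : ConvexOn ℝ Set.univ η) (hη1 : ContDiff ℝ 1 η)
    {F : ℝ → ℝ} (hF : ∀ v : ℝ, F v = ∫ w in (0:ℝ)..v, deriv f w * deriv η w) :
    0 ≤ (F ul - s * η ul) - (F ur - s * η ur) := by
  have hcont := convex_continuous hf
  have hηd : ∀ x : ℝ, DifferentiableAt ℝ η x := fun x => (hη1.differentiable one_ne_zero) x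
  have hη' : Continuous (deriv η) := hη1.continuous_deriv le_rfl
  have hmono : Monotone (deriv η) :=
    monotoneOn_univ.mp (hη.monotoneOn_deriv (fun x _ => hηd x))
  have h_ae : (fun w => deriv f w * deriv η w) =ᵐ[volume] fun w => rdf f w * deriv η w :=
    (deriv_ae_eq_rdf hf).mono fun w hw => by dsimp only; rw [hw]
  have hrdII : ∀ a b : ℝ, IntervalIntegrable (fun w => rdf f w * deriv η w) volume a b :=
    fun a b => ((rdf_mono hf).intervalIntegrable).mul_continuousOn hη'.continuousOn
  have hII : ∀ a b : ℝ, IntervalIntegrable (fun w => deriv f w * deriv η w) volume a b := by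
    intro a b
    obtain ⟨h1, h2⟩ := hrdII a b
    exact ⟨h1.congr (ae_restrict_of_ae h_ae.symm), h2.congr (ae_restrict_of_ae h_ae.symm)⟩
  have hne : ur - ul ≠ 0 := by intro h; linarith [sub_eq_zero.mp h]
  have hsmul : s * (ul - ur) = f ul - f ur := by
    rw [hs, div_mul_eq_mul_div, div_eq_iff hne]; ring
  -- F increment
  have hFinc : F ul - F ur = ∫ w in ur..ul, rdf f w * deriv η w := by
    have hadd : (∫ w in (0:ℝ)..ur, deriv f w * deriv η w)
        + (∫ w in ur..ul, deriv f w * deriv η w)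
        = ∫ w in (0:ℝ)..ul, deriv f w * deriv η w :=
      intervalIntegral.integral_add_adjacent_intervals (hII 0 ur) (hII ur ul)
    have hcongr : (∫ w in ur..ul, deriv f w * deriv η w)
        = ∫ w in ur..ul, rdf f w * deriv η w :=
      intervalIntegral.integral_congr_ae (h_ae.mono fun w hw _ => hw)
    rw [hF ul, hF ur, ← hadd, hcongr]; ring
  have hηinc : ∫ w in ur..ul, deriv η w = η ul - η ur :=
    intervalIntegral.integral_deriv_eq_sub (fun x _ => hηd x) (hη'.intervalIntegrable _ _)
  have hrdinc : ∫ w in ur..ul, rdf f w = f ul - f ur := integral_rdf hf hlr.le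
  -- minimum point of the chord gap
  set G : ℝ → ℝ := fun w => f w - f ur - s * (w - ur) with hG
  obtain ⟨c, hcmem, hcmin⟩ := isCompact_Icc.exists_isMinOn (Set.nonempty_Icc.2 hlr.le)
    (Continuous.continuousOn (by fun_prop) : ContinuousOn G (Set.Icc ur ul))
  have hGc := isMinOn_iff.mp hcmin
  have hpt : ∀ w ∈ Set.Icc ur ul, 0 ≤ (rdf f w - s) * (deriv η w - deriv η c) := by
    intro w hw
    rcases lt_trichotomy w c with h | h | h
    · have hGcw := hGc w hw
      have hsl : slope f w c ≤ s := by
        rw [slope_def_field]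
        rw [div_le_iff₀ (by linarith : (0:ℝ) < c - w)]
        simp only [hG] at hGcw
        nlinarith
      have h1 : rdf f w ≤ s := (rdf_le_slope hf h).trans hsl
      have h2 : deriv η w ≤ deriv η c := hmono h.le
      nlinarith [mul_nonneg (by linarith : (0:ℝ) ≤ s - rdf f w)
        (by linarith : (0:ℝ) ≤ deriv η c - deriv η w)]
    · subst h; simp
    · have hGcw := hGc w hw
      have hsl : s ≤ slope f c w := by
        rw [slope_def_field]
        rw [le_div_iff₀ (by linarith : (0:ℝ) < w - c)]
        simp only [hG] at hGcw
        nlinarith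
      have h1 : s ≤ rdf f w := hsl.trans (slope_le_rdf hf h)
      have h2 : deriv η c ≤ deriv η w := hmono h.le
      exact mul_nonneg (by linarith) (by linarith)
  have hineq : 0 ≤ ∫ w in ur..ul, (rdf f w - s) * (deriv η w - deriv η c) :=
    intervalIntegral.integral_nonneg hlr.le hpt
  have expand : (fun w => (rdf f w - s) * (deriv η w - deriv η c))
      = fun w => (rdf f w * deriv η w - s * deriv η w)
        - (deriv η c * rdf f w - s * deriv η c) := by
    funext w; ring
  rw [expand] at hineq
  rw [intervalIntegral.integral_sub
      ((hrdII ur ul).sub ((hη'.intervalIntegrable _ _).const_mul s))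
      ((((rdf_mono hf).intervalIntegrable (a := ur) (b := ul)).const_mul (deriv η c)).sub
        intervalIntegrable_const),
    intervalIntegral.integral_sub (hrdII ur ul) ((hη'.intervalIntegrable _ _).const_mul s),
    intervalIntegral.integral_sub (((rdf_mono hf).intervalIntegrable).const_mul (deriv η c))
      intervalIntegrable_const,
    intervalIntegral.integral_const_mul, intervalIntegral.integral_const_mul,
    intervalIntegral.integral_const, hηinc, hrdinc] at hineq
  simp only [smul_eq_mul] at hineq
  have hx2 : deriv η c * (f ul - f ur) = (ul - ur) * (s * deriv η c) := by
    rw [← hsmul]; ring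
  have key : 0 ≤ (∫ x in ur..ul, rdf f x * deriv η x) - s * (η ul - η ur) := by
    linarith [hineq, hx2]
  have hexp : s * (η ul - η ur) = s * η ul - s * η ur := by ring
  linarith [key, hFinc, hexp]

/-! ### Part II helpers -/

lemma oneD_zero_deriv {g g' : ℝ → ℝ} (hd : ∀ t, HasDerivAt g (g' t) t)
    {U : Set ℝ} (hU : IsOpen U) (hzero : ∀ t ∈ U, g t = 0) : ∀ t ∈ U, g' t = 0 := by
  intro t ht
  have h0 : HasDerivAt g 0 t := by
    refine (hasDerivAt_const t (0:ℝ)).congr_of_eventuallyEq ?_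
    filter_upwards [hU.mem_nhds ht] with u hu
    exact hzero u hu
  exact (hd t).unique h0

lemma oneD_Ioi {g g' : ℝ → ℝ} (hd : ∀ t, HasDerivAt g (g' t) t) (hc : Continuous g')
    {R : ℝ} (hR : ∀ t, R ≤ t → g t = 0) {a : ℝ} (haR : a ≤ R) :
    ∫ t in Set.Ioi a, g' t = - g a := by
  have hzero : ∀ t ∈ Set.Ioi R, g' t = 0 :=
    oneD_zero_deriv hd isOpen_Ioi (fun t ht => hR t (le_of_lt ht))
  rw [← Set.Ioc_union_Ioi_eq_Ioi haR,
    setIntegral_union (Set.Ioc_disjoint_Ioi le_rfl) measurableSet_Ioi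
      (hc.intervalIntegrable a R).1
      ((integrableOn_zero (s := Set.Ioi R)).congr_fun
        (fun t ht => (hzero t ht).symm) measurableSet_Ioi),
    setIntegral_congr_fun measurableSet_Ioi hzero, integral_zero,
    ← intervalIntegral.integral_of_le haR,
    intervalIntegral.integral_eq_sub_of_hasDerivAt (fun x _ => hd x)
      (hc.intervalIntegrable a R), hR R le_rfl]
  ring

lemma oneD_Ici {g g' : ℝ → ℝ} (hd : ∀ t, HasDerivAt g (g' t) t) (hc : Continuous g')
    {R : ℝ} (hR : ∀ t, R ≤ t → g t = 0) {a : ℝ} (haR : a ≤ R) :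
    ∫ t in Set.Ici a, g' t = - g a := by
  rw [integral_Ici_eq_integral_Ioi]; exact oneD_Ioi hd hc hR haR

lemma oneD_Iio {g g' : ℝ → ℝ} (hd : ∀ t, HasDerivAt g (g' t) t) (hc : Continuous g')
    {L : ℝ} (hL : ∀ t, t ≤ L → g t = 0) {b : ℝ} (hLb : L ≤ b) :
    ∫ t in Set.Iio b, g' t = g b := by
  have hzero : ∀ t ∈ Set.Iio L, g' t = 0 :=
    oneD_zero_deriv hd isOpen_Iio (fun t ht => hL t (le_of_lt ht))
  have hint : IntegrableOn g' (Set.Ico L b) volume :=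
    (hc.integrableOn_Icc).mono_set Set.Ico_subset_Icc_self
  rw [← Set.Iio_union_Ico_eq_Iio hLb,
    setIntegral_union ((Set.Iio_disjoint_Ici le_rfl).mono_right Set.Ico_subset_Ici_self) measurableSet_Ico
      ((integrableOn_zero (s := Set.Iio L)).congr_fun
        (fun t ht => (hzero t ht).symm) measurableSet_Iio) hint,
    setIntegral_congr_fun measurableSet_Iio hzero, integral_zero,
    integral_Ico_eq_integral_Ioo, ← integral_Ioc_eq_integral_Ioo,
    ← intervalIntegral.integral_of_le hLb,
    intervalIntegral.integral_eq_sub_of_hasDerivAt (fun x _ => hd x)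
      (hc.intervalIntegrable L b), hL L le_rfl]
  ring

lemma box_bound {W : ℝ × ℝ → ℝ} (hWc : HasCompactSupport W) :
    ∃ R : ℝ, 0 < R ∧ ∀ p : ℝ × ℝ, (R < |p.1| ∨ R < |p.2|) → W p = 0 := by
  obtain ⟨R, hR⟩ := hWc.isBounded.subset_closedBall (0 : ℝ × ℝ)
  refine ⟨max R 1, by positivity, fun p hp => ?_⟩
  apply image_eq_zero_of_notMem_tsupport
  intro hmem
  have h2 := mem_closedBall_zero_iff.mp (hR hmem)
  rw [Prod.norm_def, Real.norm_eq_abs, Real.norm_eq_abs] at h2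
  have hR1 : R ≤ max R 1 := le_max_left R 1
  rcases hp with h | h
  · exact absurd ((le_max_left _ _).trans h2) (by linarith)
  · exact absurd ((le_max_right _ _).trans h2) (by linarith)

lemma slice_left_hcs {W : ℝ × ℝ → ℝ} (hWc : HasCompactSupport W) (t : ℝ) :
    HasCompactSupport (fun y => W (t, y)) := by
  obtain ⟨R, hR0, hR⟩ := box_bound hWc
  refine HasCompactSupport.intro (isCompact_Icc (a := -R) (b := R)) (fun y hy => ?_)
  simp only [Set.mem_Icc, not_and_or, not_le] at hy
  exact hR (t, y) (Or.inr (by rcases hy with h | h <;> [exact lt_of_lt_of_le (by linarith) (neg_le_abs y); exact lt_of_lt_of_le h (le_abs_self y)]))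

lemma slice_right_hcs {W : ℝ × ℝ → ℝ} (hWc : HasCompactSupport W) (y : ℝ) :
    HasCompactSupport (fun t => W (t, y)) := by
  obtain ⟨R, hR0, hR⟩ := box_bound hWc
  refine HasCompactSupport.intro (isCompact_Icc (a := -R) (b := R)) (fun t ht => ?_)
  simp only [Set.mem_Icc, not_and_or, not_le] at ht
  exact hR (t, y) (Or.inl (by rcases ht with h | h <;> [exact lt_of_lt_of_le (by linarith) (neg_le_abs t); exact lt_of_lt_of_le h (le_abs_self t)]))

lemma int_mul_restrict {A B : Set ℝ}
    {m : ℝ × ℝ → ℝ} (hm : Measurable m) {M : ℝ} (hM : ∀ p, ‖m p‖ ≤ M)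
    {W : ℝ × ℝ → ℝ} (hW : Continuous W) (hWc : HasCompactSupport W) :
    Integrable (fun p => m p * W p) ((volume.restrict A).prod (volume.restrict B)) := by
  rw [Measure.prod_restrict]
  have h1 : Integrable W (volume : Measure (ℝ × ℝ)) :=
    hW.integrable_of_hasCompactSupport hWc
  have h2 : Integrable (fun p => m p * W p) (volume : Measure (ℝ × ℝ)) :=
    h1.bdd_mul hm.aestronglyMeasurable (Filter.Eventually.of_forall hM)
  rw [← Measure.volume_eq_prod]
  exact h2.restrict

lemma int_slice {m : ℝ → ℝ} (hm : Measurable m) {M : ℝ} (hM : ∀ y, ‖m y‖ ≤ M)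
    {W : ℝ × ℝ → ℝ} (hW : Continuous W) (hWc : HasCompactSupport W) (t : ℝ) :
    Integrable (fun y => m y * W (t, y)) volume :=
  Integrable.bdd_mul
    ((hW.comp (continuous_const.prodMk continuous_id)).integrable_of_hasCompactSupport
      (slice_left_hcs hWc t))
    hm.aestronglyMeasurable (Filter.Eventually.of_forall hM)


/-- A single shock of a convex flux, with speed given by the Rankine–Hugoniot condition,
satisfies all Kruzkov entropy inequalities: for every convex `C¹` entropy `η` with
entropy flux `F v = ∫_0^v f'(w) η'(w) dw` and every nonnegative smooth test function `θ`
compactly supported in `(0,∞) × ℝ`,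
`∫∫ (η(u) θ_t + F(u) θ_x) ≥ 0`, where `u(t,x) = u_l` for `x < s t`, `u(t,x) = u_r`
for `x > s t`. -/
theorem stmt_17 (f : ℝ → ℝ) (hf : ConvexOn ℝ Set.univ f)
    (ul ur : ℝ) (hlr : ur < ul)
    (s : ℝ) (hs : s = (f ur - f ul) / (ur - ul))
    (u : ℝ → ℝ → ℝ) (hu : ∀ t x : ℝ, u t x = if x < s * t then ul else ur)
    (η : ℝ → ℝ) (hη : ConvexOn ℝ Set.univ η) (hη1 : ContDiff ℝ 1 η)
    (F : ℝ → ℝ) (hF : ∀ v : ℝ, F v = ∫ w in (0:ℝ)..v, deriv f w * deriv η w) :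
    ∀ θ : ℝ × ℝ → ℝ, ContDiff ℝ (⊤ : ℕ∞) θ → HasCompactSupport θ →
      (∀ p : ℝ × ℝ, 0 ≤ θ p) →
      (tsupport θ ⊆ Set.Ioi (0:ℝ) ×ˢ (Set.univ : Set ℝ)) →
      0 ≤ ∫ x : ℝ, ∫ t in Set.Ioi (0:ℝ),
        (η (u t x) * fderiv ℝ θ (t, x) (1, 0) + F (u t x) * fderiv ℝ θ (t, x) (0, 1)) := by
  intro θ hθ hθc hθ0 hθsup
  have hθdiff : Differentiable ℝ θ := hθ.differentiable (by simp)
  set θt : ℝ × ℝ → ℝ := fun p => fderiv ℝ θ p (1, 0) with hθt_def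
  set θx : ℝ × ℝ → ℝ := fun p => fderiv ℝ θ p (0, 1) with hθx_def
  have hfcont : Continuous (fun p => fderiv ℝ θ p) := hθ.continuous_fderiv (by simp)
  have hθtc : Continuous θt := hfcont.clm_apply continuous_const
  have hθxc : Continuous θx := hfcont.clm_apply continuous_const
  have hθzero : ∀ p : ℝ × ℝ, p.1 ≤ 0 → θ p = 0 := by
    intro p hp
    by_contra h
    have hmem : p ∈ tsupport θ := subset_tsupport θ h
    exact absurd (hθsup hmem).1 (by simpa using hp.not_gt)
  -- shear map
  set l : ℝ × ℝ → ℝ × ℝ := fun p => (p.1, p.2 + s * p.1) with hl_def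
  set ψ : ℝ × ℝ → ℝ := fun p => θ (l p) with hψ_def
  have hψsmooth : ContDiff ℝ (⊤ : ℕ∞) ψ := by
    apply hθ.comp
    exact contDiff_fst.prodMk (contDiff_snd.add (contDiff_const.mul contDiff_fst))
  have hψdiff : Differentiable ℝ ψ := hψsmooth.differentiable (by simp)
  let e : (ℝ × ℝ) ≃ₜ (ℝ × ℝ) :=
    { toFun := fun p => (p.1, p.2 + s * p.1)
      invFun := fun p => (p.1, p.2 - s * p.1)
      left_inv := fun p => by simp
      right_inv := fun p => by simp
      continuous_toFun := by fun_prop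
      continuous_invFun := by fun_prop }
  have hψc : HasCompactSupport ψ := hθc.comp_homeomorph e
  set ψt : ℝ × ℝ → ℝ := fun p => fderiv ℝ ψ p (1, 0) with hψt_def
  set ψy : ℝ × ℝ → ℝ := fun p => fderiv ℝ ψ p (0, 1) with hψy_def
  have hψtc : Continuous ψt := (hψsmooth.continuous_fderiv (by simp)).clm_apply continuous_const
  have hψyc : Continuous ψy := (hψsmooth.continuous_fderiv (by simp)).clm_apply continuous_const
  have hψt_hcs : HasCompactSupport ψt := hψc.fderiv_apply ℝ (1, 0)
  have hψy_hcs : HasCompactSupport ψy := hψc.fderiv_apply ℝ (0, 1)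
  -- chain rule
  set L : ℝ × ℝ →L[ℝ] ℝ × ℝ :=
    (ContinuousLinearMap.fst ℝ ℝ ℝ).prod
      ((ContinuousLinearMap.snd ℝ ℝ ℝ) + s • (ContinuousLinearMap.fst ℝ ℝ ℝ)) with hL_def
  have hψeq : ψ = θ ∘ ⇑L := by
    funext p
    simp [hψ_def, hl_def, hL_def, ContinuousLinearMap.prod_apply]
  have hfψ : ∀ p, fderiv ℝ ψ p = (fderiv ℝ θ (l p)).comp L := by
    intro p
    have h1 : HasFDerivAt θ (fderiv ℝ θ (l p)) (l p) := (hθdiff (l p)).hasFDerivAt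
    have h2 : HasFDerivAt (θ ∘ ⇑L) ((fderiv ℝ θ (l p)).comp L) p := h1.comp p L.hasFDerivAt
    rw [hψeq]
    exact h2.fderiv
  have hL10 : L ((1:ℝ), (0:ℝ)) = ((1:ℝ), s) := by
    simp [hL_def, ContinuousLinearMap.prod_apply]
  have hL01 : L ((0:ℝ), (1:ℝ)) = ((0:ℝ), (1:ℝ)) := by
    simp [hL_def, ContinuousLinearMap.prod_apply]
  have hvec : ((1:ℝ), s) = ((1:ℝ), (0:ℝ)) + s • ((0:ℝ), (1:ℝ)) := by
    simp [Prod.ext_iff]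
  have hψt_eq : ∀ p, ψt p = θt (l p) + s * θx (l p) := by
    intro p
    show fderiv ℝ ψ p (1, 0) = _
    rw [hfψ p, ContinuousLinearMap.comp_apply, hL10, hvec, map_add,
      ContinuousLinearMap.map_smul]
    simp [hθt_def, hθx_def, smul_eq_mul]
  have hψy_eq : ∀ p, ψy p = θx (l p) := by
    intro p
    show fderiv ℝ ψ p (0, 1) = _
    rw [hfψ p, ContinuousLinearMap.comp_apply, hL01]
  -- slice derivatives of ψ
  have hdψt : ∀ (y t : ℝ), HasDerivAt (fun τ => ψ (τ, y)) (ψt (t, y)) t := by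
    intro y t
    have h1 : HasFDerivAt ψ (fderiv ℝ ψ (t, y)) (t, y) := (hψdiff (t, y)).hasFDerivAt
    have h2 : HasDerivAt (fun τ : ℝ => (τ, y)) ((1:ℝ), (0:ℝ)) t :=
      HasDerivAt.prodMk (hasDerivAt_id t) (hasDerivAt_const t y)
    exact h1.comp_hasDerivAt (f := fun τ : ℝ => (τ, y)) t h2
  have hdψy : ∀ (t z : ℝ), HasDerivAt (fun ξ => ψ (t, ξ)) (ψy (t, z)) z := by
    intro t z
    have h1 : HasFDerivAt ψ (fderiv ℝ ψ (t, z)) (t, z) := (hψdiff (t, z)).hasFDerivAt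
    have h2 : HasDerivAt (fun ξ : ℝ => (t, ξ)) ((0:ℝ), (1:ℝ)) z :=
      HasDerivAt.prodMk (hasDerivAt_const z t) (hasDerivAt_id z)
    exact h1.comp_hasDerivAt z h2
  -- support bounds
  obtain ⟨R, hR0, hRψ⟩ := box_bound hψc
  have hψzero : ∀ p : ℝ × ℝ, p.1 ≤ 0 → ψ p = 0 := fun p hp => hθzero (l p) hp
  have hψRright : ∀ y t : ℝ, R + 1 ≤ t → ψ (t, y) = 0 := fun y t ht =>
    hRψ (t, y) (Or.inl (by rw [abs_of_pos (by linarith)]; linarith))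
  have hψRleft : ∀ t y : ℝ, y ≤ -(R + 1) → ψ (t, y) = 0 := fun t y hy =>
    hRψ (t, y) (Or.inr (by rw [abs_of_neg (by linarith)]; linarith))
  have hψRright' : ∀ t y : ℝ, R + 1 ≤ y → ψ (t, y) = 0 := fun t y hy =>
    hRψ (t, y) (Or.inr (by rw [abs_of_pos (by linarith)]; linarith))
  -- step functions
  set cl : ℝ := F ul - s * η ul with hcl
  set cr : ℝ := F ur - s * η ur with hcr
  set A : ℝ → ℝ := fun y => if y < 0 then η ul else η ur with hA_def
  set C : ℝ → ℝ := fun y => if y < 0 then cl else cr with hC_def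
  have hmA : Measurable A := Measurable.ite measurableSet_Iio measurable_const measurable_const
  have hmC : Measurable C := Measurable.ite measurableSet_Iio measurable_const measurable_const
  have hMA : ∀ y, ‖A y‖ ≤ |η ul| + |η ur| := by
    intro y
    rw [Real.norm_eq_abs]
    by_cases h : y < 0
    · simp only [hA_def, if_pos h]; linarith [abs_nonneg (η ur)]
    · simp only [hA_def, if_neg h]; linarith [abs_nonneg (η ul)]
  have hMC : ∀ y, ‖C y‖ ≤ |cl| + |cr| := by
    intro y
    rw [Real.norm_eq_abs]
    by_cases h : y < 0
    · simp only [hC_def, if_pos h]; linarith [abs_nonneg cr]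
    · simp only [hC_def, if_neg h]; linarith [abs_nonneg cl]
  -- rewrite u-compositions
  have huη : ∀ t x : ℝ, η (u t x) = if x < s * t then η ul else η ur := by
    intro t x; rw [hu t x]; split <;> rfl
  have huF : ∀ t x : ℝ, F (u t x) = if x < s * t then F ul else F ur := by
    intro t x; rw [hu t x]; split <;> rfl
  show 0 ≤ ∫ x : ℝ, ∫ t in Set.Ioi (0:ℝ), (η (u t x) * θt (t, x) + F (u t x) * θx (t, x))
  -- integrability for the first swap
  have hswap1int : Integrable (Function.uncurry fun x t =>
      η (u t x) * θt (t, x) + F (u t x) * θx (t, x))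
      (volume.prod (volume.restrict (Set.Ioi (0:ℝ)))) := by
    have hWt : Continuous (fun q : ℝ × ℝ => θt (q.2, q.1)) := hθtc.comp continuous_swap
    have hWtc : HasCompactSupport (fun q : ℝ × ℝ => θt (q.2, q.1)) :=
      (hθc.fderiv_apply ℝ (1, 0)).comp_homeomorph (Homeomorph.prodComm ℝ ℝ)
    have hWx : Continuous (fun q : ℝ × ℝ => θx (q.2, q.1)) := hθxc.comp continuous_swap
    have hWxc : HasCompactSupport (fun q : ℝ × ℝ => θx (q.2, q.1)) :=
      (hθc.fderiv_apply ℝ (0, 1)).comp_homeomorph (Homeomorph.prodComm ℝ ℝ)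
    have hmes : MeasurableSet {q : ℝ × ℝ | q.1 < s * q.2} :=
      measurableSet_lt measurable_fst (measurable_const.mul measurable_snd)
    have hm1 : Measurable (fun q : ℝ × ℝ => if q.1 < s * q.2 then η ul else η ur) :=
      Measurable.ite hmes measurable_const measurable_const
    have hm2 : Measurable (fun q : ℝ × ℝ => if q.1 < s * q.2 then F ul else F ur) :=
      Measurable.ite hmes measurable_const measurable_const
    have hM1 : ∀ q : ℝ × ℝ, ‖(if q.1 < s * q.2 then η ul else η ur)‖ ≤ |η ul| + |η ur| := by
      intro q; rw [Real.norm_eq_abs]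
      split
      · linarith [abs_nonneg (η ur)]
      · linarith [abs_nonneg (η ul)]
    have hM2 : ∀ q : ℝ × ℝ, ‖(if q.1 < s * q.2 then F ul else F ur)‖ ≤ |F ul| + |F ur| := by
      intro q; rw [Real.norm_eq_abs]
      split
      · linarith [abs_nonneg (F ur)]
      · linarith [abs_nonneg (F ul)]
    have h1 := int_mul_restrict (A := Set.univ) (B := Set.Ioi (0:ℝ)) hm1 hM1 hWt hWtc
    have h2 := int_mul_restrict (A := Set.univ) (B := Set.Ioi (0:ℝ)) hm2 hM2 hWx hWxc
    rw [Measure.restrict_univ] at h1 h2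
    refine (h1.add h2).congr (Filter.Eventually.of_forall fun q => ?_)
    simp only [Function.uncurry, Pi.add_apply]
    rw [huη, huF]
  have swap1 : (∫ x : ℝ, ∫ t in Set.Ioi (0:ℝ),
        (η (u t x) * θt (t, x) + F (u t x) * θx (t, x)))
      = ∫ t in Set.Ioi (0:ℝ), ∫ x : ℝ,
        (η (u t x) * θt (t, x) + F (u t x) * θx (t, x)) :=
    MeasureTheory.integral_integral_swap hswap1int
  rw [swap1]
  -- translate the inner integral
  have step2 : ∀ t : ℝ, (∫ x : ℝ, (η (u t x) * θt (t, x) + F (u t x) * θx (t, x)))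
      = ∫ y : ℝ, (A y * ψt (t, y) + C y * ψy (t, y)) := by
    intro t
    rw [← integral_add_right_eq_self (μ := volume)
      (fun x => η (u t x) * θt (t, x) + F (u t x) * θx (t, x)) (s * t)]
    refine integral_congr_ae (Filter.Eventually.of_forall fun y => ?_)
    have hcond : (y + s * t < s * t) ↔ (y < 0) := by constructor <;> intro h <;> linarith
    have hl1 : l (t, y) = (t, y + s * t) := rfl
    have h1 : θt (t, y + s * t) = ψt (t, y) - s * ψy (t, y) := by
      rw [hψt_eq (t, y), hψy_eq (t, y), hl1]; ring
    have h2 : θx (t, y + s * t) = ψy (t, y) := by rw [hψy_eq (t, y), hl1]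
    simp only []
    rw [huη, huF, h1, h2]
    by_cases h : y < 0
    · simp only [hA_def, hC_def, hcl, hcr, if_pos (hcond.mpr h), if_pos h]; ring
    · simp only [hA_def, hC_def, hcl, hcr, if_neg (fun hc => h (hcond.mp hc)), if_neg h]; ring
  simp only [step2]
  -- product integrability on the other side
  have hprodA : Integrable (Function.uncurry fun t y => A y * ψt (t, y))
      ((volume.restrict (Set.Ioi (0:ℝ))).prod volume) := by
    have h := int_mul_restrict (A := Set.Ioi (0:ℝ)) (B := Set.univ)
      (m := fun q : ℝ × ℝ => A q.2) (hmA.comp measurable_snd) (fun q => hMA q.2) hψtc hψt_hcs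
    rw [Measure.restrict_univ] at h
    exact h
  have hprodC : Integrable (Function.uncurry fun t y => C y * ψy (t, y))
      ((volume.restrict (Set.Ioi (0:ℝ))).prod volume) := by
    have h := int_mul_restrict (A := Set.Ioi (0:ℝ)) (B := Set.univ)
      (m := fun q : ℝ × ℝ => C q.2) (hmC.comp measurable_snd) (fun q => hMC q.2) hψyc hψy_hcs
    rw [Measure.restrict_univ] at h
    exact h
  have hsplit : (∫ t in Set.Ioi (0:ℝ), ∫ y : ℝ, (A y * ψt (t, y) + C y * ψy (t, y)))
      = (∫ t in Set.Ioi (0:ℝ), ∫ y : ℝ, A y * ψt (t, y))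
        + ∫ t in Set.Ioi (0:ℝ), ∫ y : ℝ, C y * ψy (t, y) := by
    calc (∫ t in Set.Ioi (0:ℝ), ∫ y : ℝ, (A y * ψt (t, y) + C y * ψy (t, y)))
        = ∫ t in Set.Ioi (0:ℝ),
            ((∫ y : ℝ, A y * ψt (t, y)) + ∫ y : ℝ, C y * ψy (t, y)) := by
          refine integral_congr_ae (Filter.Eventually.of_forall fun t => ?_)
          exact integral_add (int_slice hmA hMA hψtc hψt_hcs t)
            (int_slice hmC hMC hψyc hψy_hcs t)
      _ = _ := integral_add hprodA.integral_prod_left hprodC.integral_prod_left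
  -- term A vanishes
  have htermA : (∫ t in Set.Ioi (0:ℝ), ∫ y : ℝ, A y * ψt (t, y)) = 0 := by
    have swapA : (∫ t in Set.Ioi (0:ℝ), ∫ y : ℝ, A y * ψt (t, y))
        = ∫ y : ℝ, ∫ t in Set.Ioi (0:ℝ), A y * ψt (t, y) :=
      MeasureTheory.integral_integral_swap hprodA
    rw [swapA]
    have hzero : ∀ y : ℝ, (∫ t in Set.Ioi (0:ℝ), A y * ψt (t, y)) = 0 := by
      intro y
      rw [integral_const_mul]
      have hFTC : (∫ t in Set.Ioi (0:ℝ), ψt (t, y)) = - ψ (0, y) :=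
        oneD_Ioi (fun t => hdψt y t) (hψtc.comp (continuous_id.prodMk continuous_const))
          (fun t ht => hψRright y t ht) (by linarith : (0:ℝ) ≤ R + 1)
      rw [hFTC, hψzero (0, y) le_rfl]
      ring
    simp only [hzero, integral_zero]
  -- term C
  have htermC : ∀ t : ℝ, (∫ y : ℝ, C y * ψy (t, y)) = (cl - cr) * ψ (t, 0) := by
    intro t
    have hint : Integrable (fun y => C y * ψy (t, y)) volume :=
      int_slice hmC hMC hψyc hψy_hcs t
    have hsplit2 := integral_add_compl (measurableSet_Iio : MeasurableSet (Set.Iio (0:ℝ))) hint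
    rw [compl_Iio] at hsplit2
    have hIio : (∫ y in Set.Iio (0:ℝ), C y * ψy (t, y)) = cl * ψ (t, 0) := by
      rw [setIntegral_congr_fun measurableSet_Iio
        (fun y (hy : y ∈ Set.Iio (0:ℝ)) => by
          simp only [hC_def, if_pos (Set.mem_Iio.mp hy)] : Set.EqOn _ (fun y => cl * ψy (t, y)) _),
        integral_const_mul,
        oneD_Iio (fun z => hdψy t z) (hψyc.comp (continuous_const.prodMk continuous_id))
          (fun z hz => hψRleft t z hz) (by linarith : -(R + 1) ≤ (0:ℝ))]
    have hIci : (∫ y in Set.Ici (0:ℝ), C y * ψy (t, y)) = - (cr * ψ (t, 0)) := by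
      rw [setIntegral_congr_fun measurableSet_Ici
        (fun y (hy : y ∈ Set.Ici (0:ℝ)) => by
          simp only [hC_def, if_neg (not_lt.mpr (Set.mem_Ici.mp hy))]
            : Set.EqOn _ (fun y => cr * ψy (t, y)) _),
        integral_const_mul,
        oneD_Ici (fun z => hdψy t z) (hψyc.comp (continuous_const.prodMk continuous_id))
          (fun z hz => hψRright' t z hz) (by linarith : (0:ℝ) ≤ R + 1)]
      ring
    rw [← hsplit2, hIio, hIci]; ring
  simp only [htermC] at hsplit ⊢
  rw [hsplit, htermA, zero_add, integral_const_mul]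
  have hψθ : ∀ t : ℝ, ψ (t, 0) = θ (t, s * t) := by
    intro t
    show θ (l (t, 0)) = θ (t, s * t)
    simp [hl_def]
  have hJ0 : 0 ≤ ∫ t in Set.Ioi (0:ℝ), ψ (t, 0) :=
    setIntegral_nonneg measurableSet_Ioi (fun t _ => by rw [hψθ t]; exact hθ0 _)
  have hentropy : 0 ≤ cl - cr := by
    have := entropy_key hf hlr hs hη hη1 hF
    rw [hcl, hcr]; linarith
  exact mul_nonneg hentropy hJ0
end
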